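/- arXiv:2406.16651 — 4 statements merged into one kernel-verified Lean document; each statement's English description precedes it below -/
import Mathlib

section
/- Let N and m be positive integers with m < N/2 and let δ > 0. For every string q ∈ B^N (where B = {0,1}×{0,1}), if a subset t ⊆ {1,…,N} of size m is chosen uniformly at random among all m-element subsets, then the probability that |w(q^ph_t) − w(q^ph_{−t})| > δ is at most 2·exp(−δ²·mN/(N+2)). Equivalently, the number of m-element subsets t of {1,…,N} for which |w(q^ph_t) − w(q^ph_{−t})| > δ is at most 2·exp(−δ²·mN/(N+2))·C(N,m). -/
open Real Finset

lemma hoeffding_bernoulli (p : ℝ) (hp0 : 0 ≤ p) (hp1 : p ≤ 1) (s : ℝ) :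
    (1 - p) + p * Real.exp s ≤ Real.exp (p * s + s ^ 2 / 8) := by
  set A : ℝ → ℝ := fun x => 1 - p + p * Real.exp x with hA_def
  have hA : ∀ x, 0 < A x := by
    intro x
    have hAx : A x = 1 - p + p * Real.exp x := rfl
    rw [hAx]
    rcases eq_or_lt_of_le hp0 with h | h
    · rw [← h]; norm_num
    · nlinarith [mul_pos h (Real.exp_pos x)]
  set f : ℝ → ℝ := fun x => p * x + x ^ 2 / 8 - Real.log (A x) with hf_def
  set f' : ℝ → ℝ := fun x => p + x / 4 - p * Real.exp x / A x with hf'_def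
  have hAd : ∀ x, HasDerivAt A (p * Real.exp x) x := by
    intro x
    exact ((Real.hasDerivAt_exp x).const_mul p).const_add (1 - p)
  have hfd : ∀ x, HasDerivAt f (f' x) x := by
    intro x
    have h1 : HasDerivAt (fun x : ℝ => p * x) p x := by
      simpa using (hasDerivAt_id x).const_mul p
    have h2 : HasDerivAt (fun x : ℝ => x ^ 2 / 8) (x / 4) x := by
      have := (hasDerivAt_pow 2 x).div_const 8
      refine this.congr_deriv ?_
      ring
    have h3 : HasDerivAt (fun x => Real.log (A x)) (p * Real.exp x / A x) x :=
      (hAd x).log (hA x).ne'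
    exact (h1.add h2).sub h3
  have hf'd : ∀ x, HasDerivAt f' (1/4 - p * Real.exp x * (1 - p) / (A x) ^ 2) x := by
    intro x
    have h2 : HasDerivAt (fun x : ℝ => p + x / 4) (1/4) x := by
      simpa using ((hasDerivAt_id x).div_const 4).const_add p
    have h3 : HasDerivAt (fun x => p * Real.exp x / A x)
        ((p * Real.exp x * A x - p * Real.exp x * (p * Real.exp x)) / (A x) ^ 2) x :=
      ((Real.hasDerivAt_exp x).const_mul p).div (hAd x) (hA x).ne'
    have heq : (p * Real.exp x * A x - p * Real.exp x * (p * Real.exp x)) / (A x) ^ 2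
        = p * Real.exp x * (1 - p) / (A x) ^ 2 := by
      have : A x = 1 - p + p * Real.exp x := rfl
      rw [this]; ring_nf
    rw [heq] at h3
    exact h2.sub h3
  have hf''_nonneg : ∀ x, 0 ≤ 1/4 - p * Real.exp x * (1 - p) / (A x) ^ 2 := by
    intro x
    have hApos := hA x
    have hAx : A x = 1 - p + p * Real.exp x := rfl
    rw [sub_nonneg, div_le_iff₀ (by positivity)]
    nlinarith [sq_nonneg (1 - p - p * Real.exp x), Real.exp_pos x]
  have hf'mono : Monotone f' := by
    apply monotone_of_deriv_nonneg
    · intro x; exact (hf'd x).differentiableAt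
    · intro x; rw [(hf'd x).deriv]; exact hf''_nonneg x
  have hf'0 : f' 0 = 0 := by
    simp [hf'_def, hA_def]
  have hf0 : f 0 = 0 := by
    simp [hf_def, hA_def]
  have hfnonneg : ∀ x, 0 ≤ f x := by
    intro x
    rcases le_total 0 x with hx | hx
    · have hmono : MonotoneOn f (Set.Ici (0:ℝ)) := by
        apply monotoneOn_of_deriv_nonneg (convex_Ici 0)
        · exact Continuous.continuousOn (by
            have : Differentiable ℝ f := fun y => (hfd y).differentiableAt
            exact this.continuous)
        · intro y hy
          exact ((hfd y).differentiableAt).differentiableWithinAt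
        · intro y hy
          rw [(hfd y).deriv]
          rw [← hf'0]
          exact hf'mono (le_of_lt (by simpa using hy))
      have := hmono (Set.self_mem_Ici) (Set.mem_Ici.mpr hx) hx
      linarith [hf0]
    · have hmono : AntitoneOn f (Set.Iic (0:ℝ)) := by
        apply antitoneOn_of_deriv_nonpos (convex_Iic 0)
        · exact Continuous.continuousOn (by
            have : Differentiable ℝ f := fun y => (hfd y).differentiableAt
            exact this.continuous)
        · intro y hy
          exact ((hfd y).differentiableAt).differentiableWithinAt
        · intro y hy
          rw [(hfd y).deriv]
          rw [← hf'0]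
          exact hf'mono (le_of_lt (by simpa using hy))
      have := hmono (Set.mem_Iic.mpr hx) (Set.self_mem_Iic) hx
      linarith [hf0]
    
  have hlog : Real.log (A s) ≤ p * s + s ^ 2 / 8 := by
    have := hfnonneg s
    simp only [hf_def] at this
    linarith
  calc (1 - p) + p * Real.exp s = A s := rfl
    _ = Real.exp (Real.log (A s)) := (Real.exp_log (hA s)).symm
    _ ≤ Real.exp (p * s + s ^ 2 / 8) := Real.exp_le_exp.mpr hlog

noncomputable def hgSum (N K m : ℕ) (t : ℝ) : ℝ :=
  ∑ k ∈ Finset.range (m+1), ((K.choose k * (N - K).choose (m - k) : ℕ) : ℝ) * Real.exp (t * k)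

lemma hgSum_nonneg (N K m : ℕ) (t : ℝ) : 0 ≤ hgSum N K m t := by
  apply Finset.sum_nonneg
  intro k _
  positivity

lemma hgSum_rec (N K m : ℕ) (hK : K ≤ N) (hm : m + 1 ≤ N) (t : ℝ) :
    ((m+1 : ℕ) : ℝ) * hgSum N K (m+1) t
      = (K : ℝ) * Real.exp t * hgSum (N-1) (K-1) m t
        + ((N - K : ℕ) : ℝ) * hgSum (N-1) K m t := by
  have hexp : ∀ k : ℕ, Real.exp (t * ((k:ℝ)+1)) = Real.exp t * Real.exp (t*(k:ℕ)) := by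
    intro k; rw [← Real.exp_add]; ring_nf
  have h1 : (K : ℝ) * Real.exp t * hgSum (N-1) (K-1) m t
      = ∑ j ∈ Finset.range (m+2),
          ((j * (K.choose j * (N - K).choose (m+1-j)) : ℕ) : ℝ) * Real.exp (t * j) := by
    rw [Finset.sum_range_succ' (fun j =>
      ((j * (K.choose j * (N - K).choose (m+1-j)) : ℕ) : ℝ) * Real.exp (t * j)) (m+1)]
    simp only [Nat.zero_mul, Nat.cast_zero, zero_mul, add_zero]
    rw [hgSum, Finset.mul_sum]
    apply Finset.sum_congr rfl
    intro k hk
    rcases Nat.eq_zero_or_pos K with h0 | hKpos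
    · subst h0
      simp [Nat.choose_eq_zero_of_lt (show 0 < k + 1 by omega)]
    · have hck : K * (K-1).choose k = (k+1) * K.choose (k+1) := by
        cases K with
        | zero => simp
        | succ K' =>
          simpa [Nat.succ_eq_add_one, mul_comm] using Nat.add_one_mul_choose_eq K' k
      have hckR : (K:ℝ) * ((K-1).choose k : ℝ) = ((k:ℝ)+1) * (K.choose (k+1) : ℝ) := by
        exact_mod_cast hck
      have hNK : (N-1) - (K-1) = N - K := by omega
      have hmk : m + 1 - (k+1) = m - k := by omega
      rw [hNK, hmk]
      push_cast
      rw [show t * ((k:ℝ)+1) = t * (k:ℕ) + t by push_cast; ring, Real.exp_add]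
      linear_combination (((N - K).choose (m - k) : ℝ) * Real.exp (t * (k:ℕ)) * Real.exp t) * hckR
  have h2 : ((N - K : ℕ) : ℝ) * hgSum (N-1) K m t
      = ∑ j ∈ Finset.range (m+2),
          (((m+1-j) * (K.choose j * (N - K).choose (m+1-j)) : ℕ) : ℝ) * Real.exp (t * j) := by
    rw [Finset.sum_range_succ]
    simp only [Nat.sub_self, Nat.zero_mul, Nat.cast_zero, zero_mul, add_zero]
    rw [hgSum, Finset.mul_sum]
    apply Finset.sum_congr rfl
    intro k hk
    have hkm : k ≤ m := Nat.lt_succ_iff.mp (Finset.mem_range.mp hk)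
    rcases Nat.eq_or_lt_of_le hK with h0 | hpos
    · subst h0
      simp [Nat.choose_eq_zero_of_lt (show 0 < m + 1 - k by omega)]
    · have hNK1 : 1 ≤ N - K := by omega
      have hck : (N - K) * ((N-1) - K).choose (m - k) = (m+1-k) * (N - K).choose (m+1-k) := by
        obtain ⟨L, hL⟩ : ∃ L, N - K = L + 1 := ⟨N - K - 1, by omega⟩
        have e1 : (N-1) - K = L := by omega
        have e2 : m + 1 - k = (m - k) + 1 := by omega
        rw [e1, hL, e2]
        simpa [Nat.succ_eq_add_one, mul_comm] using Nat.add_one_mul_choose_eq L (m-k)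
      have hckR : ((N - K : ℕ) : ℝ) * (((N-1) - K).choose (m - k) : ℝ)
          = ((m+1-k : ℕ) : ℝ) * ((N - K).choose (m+1-k) : ℝ) := by exact_mod_cast hck
      push_cast at hckR ⊢
      linear_combination ((K.choose k : ℝ) * Real.exp (t * (k:ℕ))) * hckR
  rw [h1, h2, ← Finset.sum_add_distrib]
  rw [hgSum, Finset.mul_sum]
  apply Finset.sum_congr rfl
  intro j hj
  have hjm : j ≤ m + 1 := Nat.lt_succ_iff.mp (Finset.mem_range.mp hj)
  have hsplit : ((m:ℝ) + 1) = (j:ℝ) + ((m+1-j:ℕ):ℝ) := by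
    rw [Nat.cast_sub hjm]; push_cast; ring
  push_cast
  push_cast at hsplit
  linear_combination ((K.choose j : ℝ) * ((N - K).choose (m+1-j) : ℝ) * Real.exp (t * (j:ℕ))) * hsplit

lemma step_ineq (n k mm t : ℝ) (hn : 2 ≤ n) (hm0 : 0 ≤ mm) (hmn : mm + 1 ≤ n)
    (hk0 : 0 ≤ k) (hkn : k ≤ n) :
    k * Real.exp t * Real.exp ((k-1)/(n-1) * (t*mm) + t^2*mm*((n-1) - mm + 1)/(8*(n-1)))
    + (n - k) * Real.exp (k/(n-1) * (t*mm) + t^2*mm*((n-1) - mm + 1)/(8*(n-1)))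
    ≤ n * Real.exp (k/n * (t*(mm+1)) + t^2*(mm+1)*(n - (mm+1) + 1)/(8*n)) := by
  have hn1 : (0:ℝ) < n - 1 := by linarith
  have hn0 : (0:ℝ) < n := by linarith
  set A : ℝ := (k-1)/(n-1) * (t*mm) + t^2*mm*((n-1) - mm + 1)/(8*(n-1)) with hA
  set B : ℝ := k/(n-1) * (t*mm) + t^2*mm*((n-1) - mm + 1)/(8*(n-1)) with hB
  set u : ℝ := t * ((n-1-mm)/(n-1)) with hu
  have h1 : t + A = B + u := by
    rw [hA, hB, hu]; field_simp; ring
  have h2 : Real.exp t * Real.exp A = Real.exp B * Real.exp u := by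
    rw [← Real.exp_add, ← Real.exp_add, h1]
  have hoef := hoeffding_bernoulli (k/n) (by positivity) ((div_le_one hn0).mpr hkn) u
  have h3 : n * Real.exp B * ((1 - k/n) + (k/n) * Real.exp u)
      ≤ n * Real.exp B * Real.exp ((k/n) * u + u^2/8) := by
    apply mul_le_mul_of_nonneg_left hoef (by positivity)
  have h4 : n * Real.exp B * ((1 - k/n) + (k/n) * Real.exp u)
      = k * Real.exp B * Real.exp u + (n - k) * Real.exp B := by
    field_simp; ring
  have h5 : n * Real.exp B * Real.exp ((k/n) * u + u^2/8)
      = n * Real.exp (B + ((k/n) * u + u^2/8)) := by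
    rw [Real.exp_add B ((k/n) * u + u^2/8)]; ring
  have hexpineq : B + ((k/n) * u + u^2/8)
      ≤ k/n * (t*(mm+1)) + t^2*(mm+1)*(n - (mm+1) + 1)/(8*n) := by
    have key : (k/n * (t*(mm+1)) + t^2*(mm+1)*(n - (mm+1) + 1)/(8*n))
        - (B + ((k/n) * u + u^2/8)) = t^2 * mm * (n-1-mm) / (8*n*(n-1)^2) := by
      rw [hB, hu]; field_simp; ring
    have hpos : (0:ℝ) ≤ t^2 * mm * (n-1-mm) / (8*n*(n-1)^2) := by
      apply div_nonneg
      · have : (0:ℝ) ≤ n - 1 - mm := by linarith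
        positivity
      · positivity
    linarith
  have h6 : n * Real.exp (B + ((k/n) * u + u^2/8))
      ≤ n * Real.exp (k/n * (t*(mm+1)) + t^2*(mm+1)*(n - (mm+1) + 1)/(8*n)) := by
    apply mul_le_mul_of_nonneg_left (Real.exp_le_exp.mpr hexpineq) (by positivity)
  calc k * Real.exp t * Real.exp A + (n - k) * Real.exp B
      = k * Real.exp B * Real.exp u + (n - k) * Real.exp B := by
        rw [show k * Real.exp t * Real.exp A = k * (Real.exp t * Real.exp A) by ring, h2]; ring
    _ = n * Real.exp B * ((1 - k/n) + (k/n) * Real.exp u) := h4.symm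
    _ ≤ n * Real.exp B * Real.exp ((k/n) * u + u^2/8) := h3
    _ = n * Real.exp (B + ((k/n) * u + u^2/8)) := h5
    _ ≤ _ := h6

lemma hgSum_le (t : ℝ) : ∀ m N K : ℕ, K ≤ N → m ≤ N →
    hgSum N K m t ≤ (N.choose m : ℝ) *
      Real.exp ((K:ℝ)/(N:ℝ) * (t * m) + t^2 * m * ((N:ℝ) - m + 1) / (8 * N)) := by
  intro m
  induction m with
  | zero =>
    intro N K hK hm
    simp [hgSum]
  | succ m ih =>
    intro N K hK hm
    have hN1 : 1 ≤ N := le_trans (by omega) hm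
    by_cases hK0 : K = 0
    · subst hK0
      have heq : hgSum N 0 (m+1) t = (N.choose (m+1) : ℝ) := by
        rw [hgSum, Finset.sum_eq_single 0]
        · simp
        · intro k hk hk0
          simp [Nat.choose_eq_zero_of_lt (Nat.pos_of_ne_zero hk0)]
        · intro h; exact absurd (Finset.mem_range.mpr (by omega)) h
      rw [heq]
      have hmn : ((m+1:ℕ):ℝ) ≤ (N:ℝ) := by exact_mod_cast hm
      have h1 : (0:ℝ) ≤ (N:ℝ) - (m+1:ℕ) + 1 := by linarith
      have h2 : (0:ℝ) ≤ t^2 * ((m+1:ℕ):ℝ) * ((N:ℝ) - (m+1:ℕ) + 1) / (8 * N) := by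
        positivity
      have hexp0 : (0:ℝ) ≤ ((0:ℕ):ℝ)/(N:ℝ) * (t * ((m+1:ℕ):ℝ)) + t^2 * ((m+1:ℕ):ℝ) * ((N:ℝ) - ((m+1:ℕ):ℝ) + 1) / (8 * N) := by
        simpa using h2
      have hone := Real.exp_le_exp.mpr hexp0
      rw [Real.exp_zero] at hone
      nlinarith [(show (0:ℝ) ≤ (N.choose (m+1) : ℝ) from Nat.cast_nonneg _)]
    · by_cases hKN : K = N
      · subst hKN
        have heq : hgSum K K (m+1) t = (K.choose (m+1) : ℝ) * Real.exp (t * ((m+1:ℕ):ℝ)) := by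
          rw [hgSum, Finset.sum_eq_single (m+1)]
          · simp
          · intro k hk hk0
            have hlt : k < m + 2 := Finset.mem_range.mp hk
            simp [Nat.choose_eq_zero_of_lt (show 0 < m + 1 - k by omega)]
          · intro h; exact absurd (Finset.mem_range.mpr (by omega)) h
        rw [heq]
        have hNN : (K:ℝ)/(K:ℝ) = 1 := div_self (by positivity)
        have hmn : ((m+1:ℕ):ℝ) ≤ (K:ℝ) := by exact_mod_cast hm
        have h1 : (0:ℝ) ≤ (K:ℝ) - (m+1:ℕ) + 1 := by linarith
        have hE : (0:ℝ) ≤ t^2 * ((m+1:ℕ):ℝ) * ((K:ℝ) - (m+1:ℕ) + 1) / (8 * K) := by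
          positivity
        have hmono : Real.exp (t * ((m+1:ℕ):ℝ))
            ≤ Real.exp ((K:ℝ)/(K:ℝ) * (t * ((m+1:ℕ):ℝ)) + t^2 * ((m+1:ℕ):ℝ) * ((K:ℝ) - ((m+1:ℕ):ℝ) + 1) / (8 * K)) := by
          apply Real.exp_le_exp.mpr
          rw [hNN]
          linarith
        exact mul_le_mul_of_nonneg_left hmono (Nat.cast_nonneg _)
      · -- main case 1 ≤ K ≤ N-1
        have hK1 : 1 ≤ K := Nat.pos_of_ne_zero hK0
        have hKN1 : K ≤ N - 1 := by omega
        have hN2 : 2 ≤ N := by omega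
        have hmpos : (0:ℝ) < ((m+1:ℕ):ℝ) := by positivity
        apply le_of_mul_le_mul_left _ hmpos
        rw [hgSum_rec N K m hK hm t]
        have IH1 := ih (N-1) (K-1) (by omega) (by omega)
        have IH2 := ih (N-1) K (by omega) (by omega)
        have hcN1 : ((N-1:ℕ):ℝ) = (N:ℝ) - 1 := by
          have := Nat.cast_sub (R := ℝ) hN1; simpa using this
        have hcK1 : ((K-1:ℕ):ℝ) = (K:ℝ) - 1 := by
          have := Nat.cast_sub (R := ℝ) hK1; simpa using this
        have hcNK : ((N-K:ℕ):ℝ) = (N:ℝ) - (K:ℝ) := by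
          have := Nat.cast_sub (R := ℝ) hK; simpa using this
        rw [hcN1, hcK1] at IH1
        rw [hcN1] at IH2
        rw [hcNK]
        have hnR : (2:ℝ) ≤ (N:ℝ) := by exact_mod_cast hN2
        have hmn : (m:ℝ) + 1 ≤ (N:ℝ) := by exact_mod_cast hm
        have hkR0 : (0:ℝ) ≤ (K:ℝ) := Nat.cast_nonneg K
        have hkRn : (K:ℝ) ≤ (N:ℝ) := by exact_mod_cast hK
        have hstep := step_ineq (N:ℝ) (K:ℝ) (m:ℝ) t hnR (Nat.cast_nonneg m) hmn hkR0 hkRn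
        have hc1 : (0:ℝ) ≤ ((N-1).choose m : ℝ) := Nat.cast_nonneg _
        have hchoose : ((m:ℝ)+1) * (N.choose (m+1) : ℝ) = (N:ℝ) * ((N-1).choose m : ℝ) := by
          have h : (N-1).succ * (N-1).choose m = (N-1).succ.choose m.succ * m.succ := Nat.add_one_mul_choose_eq (N-1) m
          have hs : (N-1).succ = N := by omega
          rw [hs] at h
          have h2 : (N:ℝ) * ((N-1).choose m : ℝ) = (N.choose (m+1) : ℝ) * (((m+1:ℕ)):ℝ) := by
            exact_mod_cast h
          push_cast at h2
          linarith
        calc (K:ℝ) * Real.exp t * hgSum (N-1) (K-1) m t + ((N:ℝ) - K) * hgSum (N-1) K m t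
            ≤ (K:ℝ) * Real.exp t * (((N-1).choose m : ℝ) *
                Real.exp (((K:ℝ)-1)/((N:ℝ)-1) * (t * m) + t^2 * m * (((N:ℝ)-1) - m + 1) / (8 * ((N:ℝ)-1))))
              + ((N:ℝ) - K) * (((N-1).choose m : ℝ) *
                Real.exp ((K:ℝ)/((N:ℝ)-1) * (t * m) + t^2 * m * (((N:ℝ)-1) - m + 1) / (8 * ((N:ℝ)-1)))) := by
              apply add_le_add
              · apply mul_le_mul_of_nonneg_left IH1 (by positivity)
              · apply mul_le_mul_of_nonneg_left IH2 (by linarith)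
          _ = ((N-1).choose m : ℝ) *
                ((K:ℝ) * Real.exp t * Real.exp (((K:ℝ)-1)/((N:ℝ)-1) * (t * m) + t^2 * m * (((N:ℝ)-1) - m + 1) / (8 * ((N:ℝ)-1)))
                 + ((N:ℝ) - K) * Real.exp ((K:ℝ)/((N:ℝ)-1) * (t * m) + t^2 * m * (((N:ℝ)-1) - m + 1) / (8 * ((N:ℝ)-1)))) := by
              ring
          _ ≤ ((N-1).choose m : ℝ) * ((N:ℝ) * Real.exp ((K:ℝ)/(N:ℝ) * (t * ((m:ℝ)+1)) + t^2 * ((m:ℝ)+1) * ((N:ℝ) - ((m:ℝ)+1) + 1) / (8 * (N:ℝ)))) := by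
              apply mul_le_mul_of_nonneg_left _ hc1
              convert hstep using 4 <;> ring
          _ = ((m+1:ℕ):ℝ) * ((N.choose (m+1) : ℝ) *
                Real.exp ((K:ℝ)/(N:ℝ) * (t * ((m+1:ℕ):ℝ)) + t^2 * ((m+1:ℕ):ℝ) * ((N:ℝ) - ((m+1:ℕ):ℝ) + 1) / (8 * (N:ℝ)))) := by
              have hcm : ((m+1:ℕ):ℝ) = (m:ℝ)+1 := by push_cast; ring
              rw [hcm, ← mul_assoc ((m:ℝ)+1) ((N.choose (m+1) : ℝ)), hchoose]
              ring

lemma count_fiber (N m k : ℕ) (hk : k ≤ m) (S : Finset (Fin N)) :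
    ((Finset.powersetCard m (Finset.univ : Finset (Fin N))).filter
       (fun t => (t ∩ S).card = k)).card
      = S.card.choose k * ((N - S.card).choose (m - k)) := by
  have hScompl : Sᶜ.card = N - S.card := by
    rw [Finset.card_compl]
    simp
  rw [← hScompl, ← Finset.card_powersetCard k S, ← Finset.card_powersetCard (m-k) Sᶜ,
    ← Finset.card_product]
  apply Finset.card_bij' (fun t _ => (t ∩ S, t \ S)) (fun p _ => p.1 ∪ p.2)
  · intro t ht
    simp only [Finset.mem_filter, Finset.mem_powersetCard_univ] at ht
    obtain ⟨hcard, hks⟩ := ht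
    simp only [Finset.mem_product, Finset.mem_powersetCard]
    refine ⟨⟨Finset.inter_subset_right, hks⟩, ⟨?_, ?_⟩⟩
    · intro a ha
      simp only [Finset.mem_sdiff] at ha
      simp [Finset.mem_compl, ha.2]
    · have := Finset.card_inter_add_card_sdiff t S
      omega
  · intro p hp
    simp only [Finset.mem_product, Finset.mem_powersetCard] at hp
    obtain ⟨⟨hp1, hc1⟩, hp2, hc2⟩ := hp
    have hdisj : Disjoint p.1 p.2 := by
      apply Finset.disjoint_left.mpr
      intro a ha1 ha2
      exact absurd (hp1 ha1) (Finset.mem_compl.mp (hp2 ha2))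
    simp only [Finset.mem_filter, Finset.mem_powersetCard_univ]
    constructor
    · rw [Finset.card_union_of_disjoint hdisj, hc1, hc2]
      omega
    · have : (p.1 ∪ p.2) ∩ S = p.1 := by
        ext a
        simp only [Finset.mem_inter, Finset.mem_union]
        constructor
        · rintro ⟨h1 | h2, hS⟩
          · exact h1
          · exact absurd hS (Finset.mem_compl.mp (hp2 h2))
        · intro h
          exact ⟨Or.inl h, hp1 h⟩
      rw [this, hc1]
  · intro t ht
    ext a
    simp only [Finset.mem_union, Finset.mem_inter, Finset.mem_sdiff]
    tauto
  · intro p hp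
    simp only [Finset.mem_product, Finset.mem_powersetCard] at hp
    obtain ⟨⟨hp1, hc1⟩, hp2, hc2⟩ := hp
    have hnot : ∀ a ∈ p.2, a ∉ S := fun a ha => Finset.mem_compl.mp (hp2 ha)
    ext1
    · ext a
      simp only [Finset.mem_inter, Finset.mem_union]
      constructor
      · rintro ⟨h1 | h2, hS⟩
        · exact h1
        · exact absurd hS (hnot a h2)
      · intro h; exact ⟨Or.inl h, hp1 h⟩
    · ext a
      simp only [Finset.mem_sdiff, Finset.mem_union]
      constructor
      · rintro ⟨h1 | h2, hS⟩
        · exact absurd (hp1 h1) hS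
        · exact h2
      · intro h; exact ⟨Or.inr h, hnot a h⟩

lemma tail_le (N K m : ℕ) (hK : K ≤ N) (hm : m ≤ N) (t0 a : ℝ) (ht0 : 0 ≤ t0) :
    ∑ k ∈ (Finset.range (m+1)).filter (fun (k : ℕ) => a < (k:ℝ)),
        ((K.choose k * (N-K).choose (m-k) : ℕ) : ℝ)
      ≤ (N.choose m : ℝ) *
        Real.exp ((K:ℝ)/(N:ℝ) * (t0 * m) + t0^2 * m * ((N:ℝ) - m + 1) / (8 * N) - t0 * a) := by
  have step1 : ∑ k ∈ (Finset.range (m+1)).filter (fun (k : ℕ) => a < (k:ℝ)),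
      ((K.choose k * (N-K).choose (m-k) : ℕ) : ℝ)
      ≤ ∑ k ∈ (Finset.range (m+1)).filter (fun (k : ℕ) => a < (k:ℝ)),
        ((K.choose k * (N-K).choose (m-k) : ℕ) : ℝ) * (Real.exp (-(t0*a)) * Real.exp (t0 * k)) := by
    apply Finset.sum_le_sum
    intro k hk
    have hak : a < (k:ℝ) := (Finset.mem_filter.mp hk).2
    have h1 : (1:ℝ) ≤ Real.exp (-(t0*a)) * Real.exp (t0*k) := by
      rw [← Real.exp_add]
      rw [show -(t0*a) + t0*k = t0*(k-a) by ring]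
      have : (0:ℝ) ≤ t0*((k:ℝ)-a) := mul_nonneg ht0 (by linarith)
      calc (1:ℝ) = Real.exp 0 := Real.exp_zero.symm
        _ ≤ _ := Real.exp_le_exp.mpr this
    nlinarith [(show (0:ℝ) ≤ ((K.choose k * (N-K).choose (m-k) : ℕ):ℝ) from Nat.cast_nonneg _)]
  have step2 : ∑ k ∈ (Finset.range (m+1)).filter (fun (k : ℕ) => a < (k:ℝ)),
        ((K.choose k * (N-K).choose (m-k) : ℕ) : ℝ) * (Real.exp (-(t0*a)) * Real.exp (t0 * k))
      ≤ Real.exp (-(t0*a)) * hgSum N K m t0 := by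
    rw [hgSum, Finset.mul_sum]
    rw [← Finset.sum_filter_add_sum_filter_not (Finset.range (m+1)) (fun (k : ℕ) => a < (k:ℝ))
      (fun k => Real.exp (-(t0*a)) * (((K.choose k * (N - K).choose (m - k) : ℕ) : ℝ) * Real.exp (t0 * k)))]
    have hsame : ∑ k ∈ (Finset.range (m+1)).filter (fun (k : ℕ) => a < (k:ℝ)),
        ((K.choose k * (N-K).choose (m-k) : ℕ) : ℝ) * (Real.exp (-(t0*a)) * Real.exp (t0 * k))
        = ∑ k ∈ (Finset.range (m+1)).filter (fun (k : ℕ) => a < (k:ℝ)),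
        Real.exp (-(t0*a)) * (((K.choose k * (N - K).choose (m - k) : ℕ) : ℝ) * Real.exp (t0 * k)) := by
      apply Finset.sum_congr rfl
      intro k _; ring
    rw [hsame]
    have : (0:ℝ) ≤ ∑ k ∈ (Finset.range (m+1)).filter (fun (k : ℕ) => ¬ a < (k:ℝ)),
        Real.exp (-(t0*a)) * (((K.choose k * (N - K).choose (m - k) : ℕ) : ℝ) * Real.exp (t0 * k)) := by
      apply Finset.sum_nonneg
      intro k _
      positivity
    linarith
  have step3 : Real.exp (-(t0*a)) * hgSum N K m t0
      ≤ Real.exp (-(t0*a)) * ((N.choose m : ℝ) *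
        Real.exp ((K:ℝ)/(N:ℝ) * (t0 * m) + t0^2 * m * ((N:ℝ) - m + 1) / (8 * N))) := by
    exact mul_le_mul_of_nonneg_left (hgSum_le t0 m N K hK hm) (Real.exp_pos _).le
  have step4 : Real.exp (-(t0*a)) * ((N.choose m : ℝ) *
        Real.exp ((K:ℝ)/(N:ℝ) * (t0 * m) + t0^2 * m * ((N:ℝ) - m + 1) / (8 * N)))
      = (N.choose m : ℝ) *
        Real.exp ((K:ℝ)/(N:ℝ) * (t0 * m) + t0^2 * m * ((N:ℝ) - m + 1) / (8 * N) - t0 * a) := by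
    have hcomb : Real.exp (-(t0*a)) * Real.exp ((K:ℝ)/(N:ℝ) * (t0 * m) + t0^2 * m * ((N:ℝ) - m + 1) / (8 * N))
        = Real.exp ((K:ℝ)/(N:ℝ) * (t0 * m) + t0^2 * m * ((N:ℝ) - m + 1) / (8 * N) - t0 * a) := by
      rw [← Real.exp_add]; congr 1; ring
    calc Real.exp (-(t0*a)) * ((N.choose m : ℝ) *
          Real.exp ((K:ℝ)/(N:ℝ) * (t0 * m) + t0^2 * m * ((N:ℝ) - m + 1) / (8 * N)))
        = (N.choose m : ℝ) * (Real.exp (-(t0*a)) *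
          Real.exp ((K:ℝ)/(N:ℝ) * (t0 * m) + t0^2 * m * ((N:ℝ) - m + 1) / (8 * N))) := by ring
      _ = _ := by rw [hcomb]
  linarith

lemma tail_lo (N K m : ℕ) (hK : K ≤ N) (hm : m ≤ N) (t0 b : ℝ) (ht0 : 0 ≤ t0) :
    ∑ k ∈ (Finset.range (m+1)).filter (fun (k : ℕ) => (k:ℝ) < b),
        ((K.choose k * (N-K).choose (m-k) : ℕ) : ℝ)
      ≤ (N.choose m : ℝ) *
        Real.exp (((N-K:ℕ):ℝ)/(N:ℝ) * (t0 * m) + t0^2 * m * ((N:ℝ) - m + 1) / (8 * N)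
          - t0 * ((m:ℝ) - b)) := by
  have hmain := tail_le N (N-K) m (Nat.sub_le N K) hm t0 ((m:ℝ) - b) ht0
  have hNK : N - (N - K) = K := by omega
  rw [hNK] at hmain
  have hreflect : ∑ k ∈ (Finset.range (m+1)).filter (fun (k : ℕ) => (k:ℝ) < b),
        ((K.choose k * (N-K).choose (m-k) : ℕ) : ℝ)
      = ∑ k ∈ (Finset.range (m+1)).filter (fun (k : ℕ) => (m:ℝ) - b < (k:ℝ)),
        (((N-K).choose k * K.choose (m-k) : ℕ) : ℝ) := by
    rw [Finset.sum_filter, Finset.sum_filter]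
    rw [← Finset.sum_range_reflect]
    apply Finset.sum_congr rfl
    intro j hj
    have hjm : j ≤ m := Nat.lt_succ_iff.mp (Finset.mem_range.mp hj)
    have e1 : m + 1 - 1 - j = m - j := by omega
    rw [e1]
    have hcast : ((m - j : ℕ) : ℝ) = (m:ℝ) - (j:ℝ) := by
      rw [Nat.cast_sub hjm]
    have hcond : (((m - j : ℕ) : ℝ) < b) ↔ ((m:ℝ) - b < (j:ℝ)) := by
      rw [hcast]
      constructor <;> intro h <;> linarith
    rw [show m - (m - j) = j from by omega]
    simp only [hcond]
    by_cases hc : (m:ℝ) - b < (j:ℝ)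
    · simp only [if_pos hc]
      push_cast
      ring
    · simp only [if_neg hc]
  rw [hreflect]
  exact hmain

set_option maxHeartbeats 1000000 in
lemma master (N m : ℕ) (hm : 0 < m) (hmN : 2*m + 1 ≤ N) (δ : ℝ) (hδ : 0 < δ)
    (P : Fin N → Prop) [DecidablePred P] :
    (((Finset.powersetCard m (Finset.univ : Finset (Fin N))).filter (fun t =>
        δ < |((t.filter P).card : ℝ) / (t.card : ℝ)
            - (((tᶜ).filter P).card : ℝ) / ((tᶜ).card : ℝ)|)).card : ℝ)
      ≤ 2 * Real.exp (-(δ ^ 2) * ((m : ℝ) * (N : ℝ)) / ((N : ℝ) + 2)) * (N.choose m) := by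
  classical
  have hmleN : m ≤ N := by omega
  have hN3 : 3 ≤ N := by omega
  set S : Finset (Fin N) := Finset.univ.filter P with hSdef
  set K : ℕ := S.card with hKdef
  have hKN : K ≤ N := by
    rw [hKdef]
    calc S.card ≤ (Finset.univ : Finset (Fin N)).card := Finset.card_le_univ S
      _ = N := by simp
  have hfilter_eq : ∀ t : Finset (Fin N), t.filter P = t ∩ S := by
    intro t
    ext a
    simp only [Finset.mem_filter, Finset.mem_inter, hSdef, Finset.mem_univ, true_and]
  -- real number facts
  have hmR : (0:ℝ) < (m:ℝ) := by exact_mod_cast hm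
  have hNR : (0:ℝ) < (N:ℝ) := by positivity
  have h2m : 2*(m:ℝ) + 1 ≤ (N:ℝ) := by exact_mod_cast hmN
  have hNmR : (0:ℝ) < (N:ℝ) - m := by linarith
  set s : ℝ := δ*((m:ℝ)*((N:ℝ)-m))/N with hs_def
  set v : ℝ := (m:ℝ)*((N:ℝ)-m+1)/N with hv_def
  have hspos : 0 < s := by rw [hs_def]; positivity
  have hvpos : 0 < v := by
    rw [hv_def]
    have h1 : (0:ℝ) < (N:ℝ) - m + 1 := by linarith
    positivity
  set t0 : ℝ := 4*s/v with ht0_def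
  have ht0 : 0 ≤ t0 := by rw [ht0_def]; positivity
  set a : ℝ := ((K:ℝ)*m + δ*((m:ℝ)*((N:ℝ)-m)))/N with ha_def
  set b : ℝ := ((K:ℝ)*m - δ*((m:ℝ)*((N:ℝ)-m)))/N with hb_def
  set badset := (Finset.powersetCard m (Finset.univ : Finset (Fin N))).filter (fun t =>
        δ < |((t.filter P).card : ℝ) / (t.card : ℝ)
            - (((tᶜ).filter P).card : ℝ) / ((tᶜ).card : ℝ)|) with hbad_def
  -- Step A : fiberwise decomposition
  have hfiber : badset.card = ∑ k ∈ Finset.range (m+1),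
      (badset.filter (fun t => (t.filter P).card = k)).card := by
    apply Finset.card_eq_sum_card_fiberwise
    intro t ht
    have htP : t ∈ Finset.powersetCard m (Finset.univ : Finset (Fin N)) :=
      Finset.mem_filter.mp (by rw [hbad_def] at ht; exact ht) |>.1
    have htm : t.card = m := Finset.mem_powersetCard_univ.mp htP
    have : (t.filter P).card ≤ m := by
      calc (t.filter P).card ≤ t.card := Finset.card_le_card (Finset.filter_subset _ _)
        _ = m := htm
    exact Finset.mem_range.mpr (show (t.filter P).card < m + 1 by omega)
  have hstepA : (badset.card : ℝ) ≤
      (∑ k ∈ (Finset.range (m+1)).filter (fun (k:ℕ) => a < (k:ℝ)),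
        ((K.choose k * (N-K).choose (m-k) : ℕ) : ℝ))
      + (∑ k ∈ (Finset.range (m+1)).filter (fun (k:ℕ) => (k:ℝ) < b),
        ((K.choose k * (N-K).choose (m-k) : ℕ) : ℝ)) := by
    rw [hfiber]
    rw [Nat.cast_sum]
    rw [Finset.sum_filter, Finset.sum_filter, ← Finset.sum_add_distrib]
    apply Finset.sum_le_sum
    intro k hk
    have hkm : k ≤ m := Nat.lt_succ_iff.mp (Finset.mem_range.mp hk)
    have hcnonneg : (0:ℝ) ≤ ((K.choose k * (N-K).choose (m-k) : ℕ) : ℝ) := Nat.cast_nonneg _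
    by_cases hne : (badset.filter (fun t => (t.filter P).card = k)).Nonempty
    · obtain ⟨t, ht⟩ := hne
      rw [Finset.mem_filter] at ht
      obtain ⟨htbad, htk⟩ := ht
      rw [hbad_def, Finset.mem_filter] at htbad
      obtain ⟨htP, hcond⟩ := htbad
      have htm : t.card = m := Finset.mem_powersetCard_univ.mp htP
      have htc : tᶜ.card = N - m := by
        rw [Finset.card_compl, htm]; simp
      have hkK : k ≤ K := by
        rw [← htk, hfilter_eq t, hKdef]
        exact Finset.card_le_card Finset.inter_subset_right
      have hsum : (t.filter P).card + (tᶜ.filter P).card = K := by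
        rw [hfilter_eq t, hfilter_eq tᶜ, hKdef]
        have h1 : t ∩ S = S ∩ t := Finset.inter_comm t S
        have h2 : tᶜ ∩ S = S \ t := by
          ext x; simp only [Finset.mem_inter, Finset.mem_compl, Finset.mem_sdiff]; tauto
        rw [h1, h2]
        exact Finset.card_inter_add_card_sdiff S t
      have hcompl : (tᶜ.filter P).card = K - k := by omega
      rw [htk, htm, hcompl, htc] at hcond
      have hcast1 : ((K - k : ℕ) : ℝ) = (K:ℝ) - k := by
        rw [Nat.cast_sub hkK]
      have hcast2 : ((N - m : ℕ) : ℝ) = (N:ℝ) - m := by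
        rw [Nat.cast_sub hmleN]
      rw [hcast1, hcast2] at hcond
      have hxe : (k:ℝ)/(m:ℝ) - ((K:ℝ) - k)/((N:ℝ) - m)
          = ((k:ℝ)*N - (K:ℝ)*m)/((m:ℝ)*((N:ℝ)-m)) := by
        field_simp
        ring
      rw [hxe] at hcond
      have hfib_le : ((badset.filter (fun t => (t.filter P).card = k)).card : ℝ)
          ≤ ((K.choose k * (N-K).choose (m-k) : ℕ) : ℝ) := by
        have hsub : badset.filter (fun t => (t.filter P).card = k)
            ⊆ (Finset.powersetCard m (Finset.univ : Finset (Fin N))).filter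
                (fun t => (t ∩ S).card = k) := by
          intro u hu
          rw [Finset.mem_filter] at hu ⊢
          obtain ⟨hu1, hu2⟩ := hu
          rw [hbad_def, Finset.mem_filter] at hu1
          exact ⟨hu1.1, by rw [← hfilter_eq u]; exact hu2⟩
        have := Finset.card_le_card hsub
        rw [count_fiber N m k hkm S] at this
        exact_mod_cast this
      rcases lt_abs.mp hcond with hhi | hlo
      · have hkgt : a < (k:ℝ) := by
          rw [ha_def, div_lt_iff₀ hNR]
          have := (lt_div_iff₀ (by positivity : (0:ℝ) < (m:ℝ)*((N:ℝ)-m))).mp hhi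
          linarith
        rw [if_pos hkgt]
        have : (0:ℝ) ≤ (if (k:ℝ) < b then ((K.choose k * (N-K).choose (m-k) : ℕ) : ℝ) else 0) := by
          split <;> positivity
        linarith
      · rw [show -(((k:ℝ)*(N:ℝ) - (K:ℝ)*(m:ℝ))/((m:ℝ)*((N:ℝ)-(m:ℝ)))) = (((K:ℝ)*(m:ℝ) - (k:ℝ)*(N:ℝ))/((m:ℝ)*((N:ℝ)-(m:ℝ)))) by ring] at hlo
        have hklt : (k:ℝ) < b := by
          rw [hb_def, lt_div_iff₀ hNR]
          have := (lt_div_iff₀ (by positivity : (0:ℝ) < (m:ℝ)*((N:ℝ)-m))).mp hlo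
          linarith
        rw [if_pos hklt]
        have : (0:ℝ) ≤ (if a < (k:ℝ) then ((K.choose k * (N-K).choose (m-k) : ℕ) : ℝ) else 0) := by
          split <;> positivity
        linarith
    · rw [Finset.not_nonempty_iff_eq_empty] at hne
      rw [hne]
      simp only [Finset.card_empty, Nat.cast_zero]
      have h1 : (0:ℝ) ≤ (if a < (k:ℝ) then ((K.choose k * (N-K).choose (m-k) : ℕ) : ℝ) else 0) := by
        split <;> positivity
      have h2 : (0:ℝ) ≤ (if (k:ℝ) < b then ((K.choose k * (N-K).choose (m-k) : ℕ) : ℝ) else 0) := by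
        split <;> positivity
      linarith
  -- Step B : Chernoff bounds on each tail
  have hhi := tail_le N K m hKN hmleN t0 a ht0
  have hlo := tail_lo N K m hKN hmleN t0 b ht0
  -- exponent computations
  have hcastNK : ((N - K : ℕ) : ℝ) = (N:ℝ) - K := by rw [Nat.cast_sub hKN]
  rw [hcastNK] at hlo
  have hstep_sv : -(t0*s) + t0^2*v/8 = -(2*s^2/v) := by
    rw [ht0_def]
    field_simp
    ring
  have hEhi : (K:ℝ)/(N:ℝ) * (t0 * m) + t0^2 * m * ((N:ℝ) - m + 1) / (8 * N) - t0 * a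
      = -(2*s^2/v) := by
    rw [← hstep_sv, ha_def, hs_def, hv_def]
    ring
  have hElo : ((N:ℝ) - K)/(N:ℝ) * (t0 * m) + t0^2 * m * ((N:ℝ) - m + 1) / (8 * N)
      - t0 * ((m:ℝ) - b) = -(2*s^2/v) := by
    rw [← hstep_sv, hb_def, hs_def, hv_def]
    field_simp
    ring
  have hkey : -(2*s^2/v) ≤ -(δ ^ 2) * ((m : ℝ) * (N : ℝ)) / ((N : ℝ) + 2) := by
    have hexpand : 2*s^2/v = 2*δ^2*(m:ℝ)*((N:ℝ)-m)^2/((N:ℝ)*((N:ℝ)-m+1)) := by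
      rw [hs_def, hv_def]
      have h1 : ((N:ℝ)-m+1) ≠ 0 := by linarith
      field_simp
    rw [hexpand, show -(δ ^ 2) * ((m : ℝ) * (N : ℝ)) / ((N : ℝ) + 2)
      = -((δ ^ 2) * ((m : ℝ) * (N : ℝ)) / ((N : ℝ) + 2)) by ring, neg_le_neg_iff]
    have hd1 : (0:ℝ) < (N:ℝ) + 2 := by linarith
    have hd2 : (0:ℝ) < (N:ℝ)*((N:ℝ)-m+1) := by
      apply mul_pos hNR; linarith
    rw [div_le_div_iff₀ hd1 hd2]
    have hu : (0:ℝ) ≤ 2*((N:ℝ)-m) - ((N:ℝ)+1) := by linarith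
    have hpoly : (N:ℝ)^2*(((N:ℝ)-m)+1) ≤ 2*((N:ℝ)-m)^2*((N:ℝ)+2) := by
      nlinarith [mul_nonneg hu hu, mul_nonneg (mul_nonneg hu hu) hNR.le,
        mul_nonneg hu hNR.le, mul_nonneg hu (mul_nonneg hNR.le hNR.le), hNR]
    nlinarith [mul_le_mul_of_nonneg_left hpoly (show (0:ℝ) ≤ δ^2*(m:ℝ) by positivity)]
  -- combine
  have hchoose_nonneg : (0:ℝ) ≤ (N.choose m : ℝ) := Nat.cast_nonneg _
  have hhi2 : (∑ k ∈ (Finset.range (m+1)).filter (fun (k:ℕ) => a < (k:ℝ)),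
        ((K.choose k * (N-K).choose (m-k) : ℕ) : ℝ))
      ≤ (N.choose m : ℝ) * Real.exp (-(δ ^ 2) * ((m : ℝ) * (N : ℝ)) / ((N : ℝ) + 2)) := by
    refine le_trans hhi ?_
    apply mul_le_mul_of_nonneg_left _ hchoose_nonneg
    apply Real.exp_le_exp.mpr
    rw [hEhi]
    exact hkey
  have hlo2 : (∑ k ∈ (Finset.range (m+1)).filter (fun (k:ℕ) => (k:ℝ) < b),
        ((K.choose k * (N-K).choose (m-k) : ℕ) : ℝ))
      ≤ (N.choose m : ℝ) * Real.exp (-(δ ^ 2) * ((m : ℝ) * (N : ℝ)) / ((N : ℝ) + 2)) := by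
    refine le_trans hlo ?_
    apply mul_le_mul_of_nonneg_left _ hchoose_nonneg
    apply Real.exp_le_exp.mpr
    rw [hElo]
    exact hkey
  calc (badset.card : ℝ)
      ≤ _ := hstepA
    _ ≤ (N.choose m : ℝ) * Real.exp (-(δ ^ 2) * ((m : ℝ) * (N : ℝ)) / ((N : ℝ) + 2))
        + (N.choose m : ℝ) * Real.exp (-(δ ^ 2) * ((m : ℝ) * (N : ℝ)) / ((N : ℝ) + 2)) :=
      add_le_add hhi2 hlo2
    _ = 2 * Real.exp (-(δ ^ 2) * ((m : ℝ) * (N : ℝ)) / ((N : ℝ) + 2)) * (N.choose m) := by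
      ring


/-- Sampling error bound for the strategy Ψ₄ on the four-letter
alphabet B = {0,1}×{0,1} (Lemma `sample-used` in the paper), stated in the
equivalent counting form: the number of m-element subsets t of {1,…,N} for
which the relative Hamming weight of the phase substring indexed by t differs
from that of the complementary substring by more than δ is at most
2·exp(−δ²·mN/(N+2))·C(N,m). -/
theorem stmt0 (N m : ℕ) (hm : 0 < m) (hmN : (m : ℝ) < (N : ℝ) / 2)
    (δ : ℝ) (hδ : 0 < δ) (q : Fin N → Bool × Bool) :
    (((Finset.powersetCard m (Finset.univ : Finset (Fin N))).filter (fun t =>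
        δ < |((t.filter fun i => (q i).2 = true).card : ℝ) / (t.card : ℝ)
            - (((tᶜ).filter fun i => (q i).2 = true).card : ℝ) / ((tᶜ).card : ℝ)|)).card : ℝ)
      ≤ 2 * Real.exp (-(δ ^ 2) * ((m : ℝ) * (N : ℝ)) / ((N : ℝ) + 2)) * (N.choose m) := by
  have h2m : 2*m + 1 ≤ N := by
    have h1 : (2*(m:ℝ)) < (N:ℝ) := by linarith
    have h2 : 2*m < N := by exact_mod_cast h1
    omega
  exact master N m hm h2m δ hδ (fun i => (q i).2 = true)
end

section
/- Let N and m be positive integers with m ≤ N/2 and let δ > 0. For every binary string q ∈ {0,1}^N, if a subset t ⊆ {1,…,N} of size m is chosen uniformly at random among all m-element subsets, then the probability that |w(q_t) − w(q_{−t})| > δ is at most 2·exp(−δ²·mN/(N+2)). -/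
set_option maxHeartbeats 1000000

open Finset

section BoumanFehr

/-- Hoeffding's lemma for a two-point distribution. -/
lemma hoeff_pt (p : ℝ) (hp0 : 0 ≤ p) (hp1 : p ≤ 1) (u : ℝ) :
    (1 - p) * Real.exp (-(p * u)) + p * Real.exp ((1 - p) * u) ≤ Real.exp (u ^ 2 / 8) := by
  have hpos : ∀ x : ℝ, 0 < 1 - p + p * Real.exp x := by
    intro x
    rcases eq_or_lt_of_le hp1 with h | h
    · simp [← h]; positivity
    · have : 0 < 1 - p := by linarith
      positivity
  -- reduce to log inequality
  have key : ∀ u : ℝ, Real.log (1 - p + p * Real.exp u) ≤ p * u + u ^ 2 / 8 := by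
    set h : ℝ → ℝ := fun x => 1 - p + p * Real.exp x with hh
    set f : ℝ → ℝ := fun x => p * x + x ^ 2 / 8 - Real.log (h x) with hf
    set f' : ℝ → ℝ := fun x => p + x / 4 - p * Real.exp x / h x with hf'
    have hd : ∀ x, HasDerivAt f (f' x) x := by
      intro x
      have h1 : HasDerivAt h (p * Real.exp x) x := by
        exact ((Real.hasDerivAt_exp x).const_mul p).const_add (1 - p)
      have h2 : HasDerivAt (fun x => Real.log (h x)) (p * Real.exp x / h x) x :=
        h1.log (ne_of_gt (hpos x))
      have h3 : HasDerivAt (fun x => p * x + x ^ 2 / 8) (p + x / 4) x := by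
        have := ((hasDerivAt_pow 2 x).div_const 8).const_add (p * x)
        have h4 : HasDerivAt (fun y : ℝ => p * y) p x := by
          simpa using (hasDerivAt_id x).const_mul p
        have := h4.add ((hasDerivAt_pow 2 x).div_const 8)
        exact this.congr_deriv (by norm_num; ring)
      exact h3.sub h2
    have hd' : ∀ x, HasDerivAt f' (1 / 4 - p * (1 - p) * Real.exp x / (h x) ^ 2) x := by
      intro x
      have h1 : HasDerivAt h (p * Real.exp x) x := by
        exact ((Real.hasDerivAt_exp x).const_mul p).const_add (1 - p)
      have h2 : HasDerivAt (fun x => p * Real.exp x) (p * Real.exp x) x :=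
        (Real.hasDerivAt_exp x).const_mul p
      have h3 : HasDerivAt (fun x => p * Real.exp x / h x)
          ((p * Real.exp x * h x - p * Real.exp x * (p * Real.exp x)) / (h x) ^ 2) x :=
        h2.div h1 (ne_of_gt (hpos x))
      have h4 : HasDerivAt (fun y : ℝ => p + y / 4) (1 / 4) x := by
        simpa using ((hasDerivAt_id x).div_const 4).const_add p
      have := h4.sub h3
      refine this.congr_deriv ?_
      have hx := hpos x
      have e : p * Real.exp x * h x - p * Real.exp x * (p * Real.exp x) = p * (1 - p) * Real.exp x := by
        simp only [hh]; ring
      rw [e]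
    have hf''nonneg : ∀ x, 0 ≤ 1 / 4 - p * (1 - p) * Real.exp x / (h x) ^ 2 := by
      intro x
      have hx := hpos x
      rw [sub_nonneg, div_le_iff₀ (by positivity)]
      have hexp : 0 < Real.exp x := Real.exp_pos x
      nlinarith [sq_nonneg ((1 - p) - p * Real.exp x)]
    have hf'mono : Monotone f' := by
      have : ∀ x, 0 ≤ deriv f' x := by
        intro x; rw [(hd' x).deriv]; exact hf''nonneg x
      exact monotone_of_deriv_nonneg (fun x => (hd' x).differentiableAt) this
    have hf'0 : f' 0 = 0 := by simp [f', h]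
    have hf0 : f 0 = 0 := by simp [f, h]
    -- f is monotone on [0,∞) and antitone on (-∞,0]
    have hmono : MonotoneOn f (Set.Ici 0) := by
      apply monotoneOn_of_deriv_nonneg (convex_Ici 0)
        (Continuous.continuousOn (by
          have : ∀ x, DifferentiableAt ℝ f x := fun x => (hd x).differentiableAt
          exact (Differentiable.continuous this)))
        (fun x _ => (hd x).differentiableAt.differentiableWithinAt)
      intro x hx
      rw [(hd x).deriv]
      have : f' 0 ≤ f' x := hf'mono (le_of_lt (by simpa using hx))
      linarith [this]
    have hanti : AntitoneOn f (Set.Iic 0) := by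
      apply antitoneOn_of_deriv_nonpos (convex_Iic 0)
        (Continuous.continuousOn (by
          have : ∀ x, DifferentiableAt ℝ f x := fun x => (hd x).differentiableAt
          exact (Differentiable.continuous this)))
        (fun x _ => (hd x).differentiableAt.differentiableWithinAt)
      intro x hx
      rw [(hd x).deriv]
      have : f' x ≤ f' 0 := hf'mono (le_of_lt (by simpa using hx))
      linarith [this]
    intro u
    have : 0 ≤ f u := by
      rcases le_total 0 u with hu | hu
      · have := hmono (Set.self_mem_Ici) (by exact hu) hu
        rw [hf0] at this; exact this
      · have := hanti (by exact hu) (Set.self_mem_Iic) hu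
        rw [hf0] at this; exact this
    have : Real.log (h u) ≤ p * u + u ^ 2 / 8 := by
      simp only [f] at this; linarith
    exact this
  have := key u
  have h2 : 1 - p + p * Real.exp u ≤ Real.exp (p * u + u ^ 2 / 8) := by
    have := Real.exp_le_exp.2 this
    rwa [Real.exp_log (hpos u)] at this
  calc (1 - p) * Real.exp (-(p * u)) + p * Real.exp ((1 - p) * u)
      = Real.exp (-(p * u)) * (1 - p + p * Real.exp u) := by
        rw [show (1 - p) * u = -(p * u) + u by ring, Real.exp_add]; ring
    _ ≤ Real.exp (-(p * u)) * Real.exp (p * u + u ^ 2 / 8) := by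
        apply mul_le_mul_of_nonneg_left h2 (le_of_lt (Real.exp_pos _))
    _ = Real.exp (u ^ 2 / 8) := by rw [← Real.exp_add]; ring_nf
/-- Hoeffding's lemma, mgf form for a two-point distribution. -/
lemma hoeff_two (p a b l : ℝ) (hp0 : 0 ≤ p) (hp1 : p ≤ 1) :
    p * Real.exp (l * a) + (1 - p) * Real.exp (l * b)
      ≤ Real.exp (l * (p * a + (1 - p) * b) + l ^ 2 * (a - b) ^ 2 / 8) := by
  have h := hoeff_pt p hp0 hp1 (l * (a - b))
  have e1 : l * a = l * (p * a + (1 - p) * b) + (1 - p) * (l * (a - b)) := by ring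
  have e2 : l * b = l * (p * a + (1 - p) * b) + -(p * (l * (a - b))) := by ring
  have e3 : l ^ 2 * (a - b) ^ 2 / 8 = (l * (a - b)) ^ 2 / 8 := by ring
  rw [e1, e2, e3, Real.exp_add, Real.exp_add, Real.exp_add]
  calc p * (Real.exp (l * (p * a + (1 - p) * b)) * Real.exp ((1 - p) * (l * (a - b))))
        + (1 - p) * (Real.exp (l * (p * a + (1 - p) * b)) * Real.exp (-(p * (l * (a - b)))))
      = Real.exp (l * (p * a + (1 - p) * b)) *
        ((1 - p) * Real.exp (-(p * (l * (a - b)))) + p * Real.exp ((1 - p) * (l * (a - b)))) := by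
        ring
    _ ≤ _ := by
        apply mul_le_mul_of_nonneg_left h (le_of_lt (Real.exp_pos _))

/-- Key arithmetic sum bound: ∑_{j=N-m}^{N-1} 1/j² ≤ m(N-m+1)/(N(N-m)²). -/
lemma sum_inv_sq_bound : ∀ (m N : ℕ), 1 ≤ m → m + 1 ≤ N →
    ∑ j ∈ Finset.Ico (N - m) N, (1 : ℝ) / (j : ℝ) ^ 2
      ≤ (m : ℝ) * ((N : ℝ) - m + 1) / ((N : ℝ) * ((N : ℝ) - m) ^ 2) := by
  intro m
  induction m with
  | zero => intro N h; omega
  | succ m ih =>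
    intro N _ hN
    rcases Nat.eq_zero_or_pos m with hm0 | hm0
    · subst hm0
      have h2 : 2 ≤ N := hN
      have : Finset.Ico (N - 1) N = {N - 1} := by
        ext j; simp [Finset.mem_Ico]; omega
      rw [this, Finset.sum_singleton]
      have hc : ((N - 1 : ℕ) : ℝ) = (N : ℝ) - 1 := by
        push_cast [Nat.cast_sub (by omega : 1 ≤ N)]; ring
      rw [hc]
      have hN1 : (0:ℝ) < (N:ℝ) - 1 := by
        have : (2:ℝ) ≤ (N:ℝ) := by exact_mod_cast h2
        linarith
      have hNpos : (0:ℝ) < (N:ℝ) := by linarith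
      push_cast
      apply le_of_eq
      field_simp
      ring
    · -- m ≥ 1, m + 2 ≤ N
      have hmN : m + 1 ≤ N := by omega
      have hstep : N - (m + 1) < N - m := by omega
      have hsplit : Finset.Ico (N - (m + 1)) N = insert (N - (m+1)) (Finset.Ico (N - m) N) := by
        ext j; simp [Finset.mem_Ico, Finset.mem_insert]; omega
      rw [hsplit, Finset.sum_insert (by simp [Finset.mem_Ico]; omega)]
      have ihN := ih N hm0 (by omega)
      set k : ℝ := (N : ℝ) - (m + 1) with hk
      have hkpos : (1:ℝ) ≤ k := by
        have : ((m:ℝ) + 2) ≤ (N:ℝ) := by exact_mod_cast hN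
        simp [hk]; linarith
      have hcast : ((N - (m+1) : ℕ) : ℝ) = k := by
        push_cast [Nat.cast_sub (by omega : m + 1 ≤ N)]; ring
      rw [hcast]
      have hNk : (N:ℝ) - m = k + 1 := by simp [hk]; ring
      have hNr : (N:ℝ) = k + 1 + m := by simp [hk]; ring
      have hNpos : (0:ℝ) < (N:ℝ) := by rw [hNr]; positivity
      have hmr : (0:ℝ) < (m:ℝ) := by exact_mod_cast hm0
      calc 1 / k ^ 2 + ∑ j ∈ Finset.Ico (N - m) N, (1 : ℝ) / (j : ℝ) ^ 2
          ≤ 1 / k ^ 2 + (m : ℝ) * ((N : ℝ) - m + 1) / ((N : ℝ) * ((N : ℝ) - m) ^ 2) := by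
            linarith [ihN]
        _ ≤ ((m:ℝ) + 1) * ((N : ℝ) - (m + 1) + 1) / ((N : ℝ) * ((N : ℝ) - (m+1)) ^ 2) := by
            rw [hNk, show (N:ℝ) - (m+1) = k by simp [hk], show (N:ℝ) - (m+1) + 1 = k + 1 by simp [hk]]
            rw [div_add_div _ _ (by positivity) (by positivity), div_le_div_iff₀ (by positivity) (by positivity)]
            rw [hNr]
            nlinarith [sq_nonneg k, hkpos, hmr, sq_nonneg (k*m), mul_pos hmr (by linarith : (0:ℝ) < k)]
      · push_cast; ring_nf; exact le_rfl

section DC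
variable {N : ℕ}

/-- Double counting: pairs (t, i) with |t| = m+1, i ∈ t  ↔  pairs (s, i), |s| = m, i ∉ s. -/
lemma double_count (g : Finset (Fin N) → ℝ) (m : ℕ) :
    ((m + 1 : ℕ) : ℝ) * ∑ t ∈ Finset.powersetCard (m + 1) Finset.univ, g t
      = ∑ s ∈ Finset.powersetCard m Finset.univ, ∑ i ∈ sᶜ, g (insert i s) := by
  have lhs_eq : ((m + 1 : ℕ) : ℝ) * ∑ t ∈ Finset.powersetCard (m + 1) Finset.univ, g t
      = ∑ t ∈ Finset.powersetCard (m + 1) Finset.univ, ∑ _i ∈ t, g t := by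
    rw [Finset.mul_sum]
    apply Finset.sum_congr rfl
    intro t ht
    rw [Finset.sum_const]
    have : t.card = m + 1 := Finset.mem_powersetCard_univ.1 ht
    rw [this, nsmul_eq_mul]
  rw [lhs_eq]
  rw [Finset.sum_sigma', Finset.sum_sigma']
  apply Finset.sum_bij' (fun x _ => (⟨x.1.erase x.2, x.2⟩ : Σ _s : Finset (Fin N), Fin N))
    (fun x _ => (⟨insert x.2 x.1, x.2⟩ : Σ _t : Finset (Fin N), Fin N))
  · intro x hx
    rw [Finset.mem_sigma] at hx ⊢
    obtain ⟨h1, h2⟩ := hx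
    have hc : x.1.card = m + 1 := Finset.mem_powersetCard_univ.1 h1
    constructor
    · rw [Finset.mem_powersetCard_univ, Finset.card_erase_of_mem h2, hc]; omega
    · simp
  · intro x hx
    rw [Finset.mem_sigma] at hx ⊢
    obtain ⟨h1, h2⟩ := hx
    have hc : x.1.card = m := Finset.mem_powersetCard_univ.1 h1
    have hni : x.2 ∉ x.1 := by simpa using h2
    constructor
    · rw [Finset.mem_powersetCard_univ, Finset.card_insert_of_notMem hni, hc]
    · exact Finset.mem_insert_self _ _
  · intro x hx
    rw [Finset.mem_sigma] at hx
    exact Sigma.ext (by simp [Finset.insert_erase hx.2]) (by simp)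
  · intro x hx
    rw [Finset.mem_sigma] at hx
    have hni : x.2 ∉ x.1 := by simpa using hx.2
    exact Sigma.ext (by simp [Finset.erase_insert hni]) (by simp)
  · intro x hx
    rw [Finset.mem_sigma] at hx
    simp [Finset.insert_erase hx.2]

end DC

section Main
variable {N : ℕ} (q : Fin N → Bool)

def Wt (q : Fin N → Bool) (t : Finset (Fin N)) : ℕ := (t.filter (fun i => q i = true)).card

lemma Wt_insert (s : Finset (Fin N)) (i : Fin N) (hi : i ∉ s) :
    ((Wt q (insert i s) : ℕ) : ℝ) = (Wt q s : ℝ) + (if q i = true then 1 else 0) := by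
  unfold Wt
  rw [Finset.filter_insert]
  by_cases h : q i = true
  · rw [if_pos h, if_pos h, Finset.card_insert_of_notMem (fun hmem => hi (Finset.mem_filter.1 hmem).1)]
    push_cast; ring
  · rw [if_neg h, if_neg h]; simp

lemma Wt_compl_add (s : Finset (Fin N)) :
    Wt q s + Wt q sᶜ = Wt q Finset.univ := by
  unfold Wt
  rw [← Finset.card_union_of_disjoint
      (Finset.disjoint_filter_filter disjoint_compl_right),
    ← Finset.filter_union, Finset.union_compl]

/-- The MGF bound for sampling without replacement (Serfling-type). -/
lemma mgf_bound (l : ℝ) : ∀ m : ℕ, m + 1 ≤ N →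
    ∑ t ∈ Finset.powersetCard m Finset.univ,
        Real.exp (l * (((Wt q t : ℝ) - (m : ℝ) * (Wt q Finset.univ : ℝ) / (N : ℝ)) / ((N : ℝ) - m)))
      ≤ (N.choose m : ℝ) * Real.exp (l ^ 2 / 8 * ∑ j ∈ Finset.Ico (N - m) N, 1 / (j : ℝ) ^ 2) := by
  intro m
  induction m with
  | zero =>
    intro _
    simp [Wt]
  | succ m ih =>
    intro hmN
    have ihm := ih (by omega)
    set K : ℝ := (Wt q Finset.univ : ℝ) with hK
    have hNpos : (0:ℝ) < N := by
      have : (m:ℝ) + 2 ≤ N := by exact_mod_cast hmN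
      nlinarith [Nat.cast_nonneg (α := ℝ) m]
    have hmlt : (m:ℝ) + 2 ≤ (N:ℝ) := by exact_mod_cast hmN
    set n' : ℝ := (N : ℝ) - m with hn'
    set d : ℝ := (N : ℝ) - (m + 1) with hd
    have hdpos : (0:ℝ) < d := by simp [hd]; linarith
    have hn'pos : (0:ℝ) < n' := by simp [hn']; linarith
    have hdn : d = n' - 1 := by simp [hd, hn']; ring
    -- the function being summed at level m+1
    set g : Finset (Fin N) → ℝ := fun t =>
      Real.exp (l * (((Wt q t : ℝ) - ((m:ℝ) + 1) * K / N) / d)) with hg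
    -- key per-s bound
    have key : ∀ s ∈ Finset.powersetCard m Finset.univ,
        ∑ i ∈ sᶜ, g (insert i s)
          ≤ n' * Real.exp (l ^ 2 / 8 * (1 / d ^ 2)) *
              Real.exp (l * (((Wt q s : ℝ) - (m : ℝ) * K / N) / n')) := by
      intro s hs
      have hscard : s.card = m := Finset.mem_powersetCard_univ.1 hs
      have hcompl_card : (sᶜ).card = N - m := by
        rw [Finset.card_compl, hscard]; simp
      have hcompl_cardR : ((sᶜ).card : ℝ) = n' := by
        rw [hcompl_card, hn']
        push_cast [Nat.cast_sub (by omega : m ≤ N)]; ring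
      set w : ℝ := (Wt q s : ℝ) with hw
      set a : ℕ := ((sᶜ).filter (fun i => q i = true)).card with ha
      have haK : w + (a : ℝ) = K := by
        rw [hw, hK, ← Wt_compl_add q s]; push_cast [Wt]; ring
      have hab : (a : ℝ) ≤ n' := by
        rw [← hcompl_cardR]
        exact_mod_cast Finset.card_filter_le _ _
      set p : ℝ := (a : ℝ) / n' with hp
      have hp0 : 0 ≤ p := by positivity
      have hp1 : p ≤ 1 := by rw [hp, div_le_one hn'pos]; exact hab
      set x1 : ℝ := (w + 1 - ((m:ℝ) + 1) * K / N) / d with hx1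
      set x0 : ℝ := (w - ((m:ℝ) + 1) * K / N) / d with hx0
      -- rewrite the sum over the complement
      have step1 : ∑ i ∈ sᶜ, g (insert i s)
          = (a : ℝ) * Real.exp (l * x1) + (n' - a) * Real.exp (l * x0) := by
        have : ∀ i ∈ sᶜ, g (insert i s)
            = if q i = true then Real.exp (l * x1) else Real.exp (l * x0) := by
          intro i hi
          have hins : i ∉ s := Finset.mem_compl.1 hi
          simp only [hg]
          by_cases h : q i = true
          · rw [if_pos h]
            congr 1
            rw [Wt_insert q s i hins, if_pos h, hx1, ← hw]
          · rw [if_neg h]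
            congr 1
            rw [Wt_insert q s i hins, if_neg h, hx0, ← hw]
            try norm_num
        rw [Finset.sum_congr rfl this, Finset.sum_ite, Finset.sum_const, Finset.sum_const]
        simp only [nsmul_eq_mul]
        rw [← ha]
        have hb : (((sᶜ).filter (fun i => ¬ q i = true)).card : ℝ) = n' - a := by
          have h2 := Finset.card_filter_add_card_filter_not
            (s := sᶜ) (p := fun i => q i = true)
          beta_reduce at h2
          have := congrArg (fun n : ℕ => (n : ℝ)) h2
          push_cast at this
          rw [hcompl_cardR] at this
          linarith [this]
        try rw [hb]
        try push_cast
        try ring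
      -- Hoeffding step
      have step2 : (a : ℝ) * Real.exp (l * x1) + (n' - a) * Real.exp (l * x0)
          = n' * (p * Real.exp (l * x1) + (1 - p) * Real.exp (l * x0)) := by
        rw [hp]; field_simp
        try ring
      have hmean : p * x1 + (1 - p) * x0 = (w - (m : ℝ) * K / N) / n' := by
        rw [hp, hx1, hx0, hdn]
        have ha' : (a : ℝ) = K - w := by linarith [haK]
        rw [ha']
        have hn1 : n' - 1 ≠ 0 := by rw [← hdn]; exact ne_of_gt hdpos
        field_simp
        rw [hn'] 
        ring
      have hdiff : (x1 - x0) ^ 2 = 1 / d ^ 2 := by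
        rw [hx1, hx0]
        field_simp
        try ring
      have step3 := hoeff_two p x1 x0 l hp0 hp1
      rw [hmean, hdiff] at step3
      calc ∑ i ∈ sᶜ, g (insert i s)
          = n' * (p * Real.exp (l * x1) + (1 - p) * Real.exp (l * x0)) := by
            rw [step1, step2]
        _ ≤ n' * Real.exp (l * ((w - (m : ℝ) * K / N) / n') + l ^ 2 * (1 / d ^ 2) / 8) := by
            apply mul_le_mul_of_nonneg_left step3 (le_of_lt hn'pos)
        _ = n' * Real.exp (l ^ 2 / 8 * (1 / d ^ 2)) *
              Real.exp (l * ((w - (m : ℝ) * K / N) / n')) := by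
            have harg : l ^ 2 / 8 * (1 / d ^ 2) + l * ((w - (m : ℝ) * K / N) / n')
                = l * ((w - (m : ℝ) * K / N) / n') + l ^ 2 * (1 / d ^ 2) / 8 := by
              ring
            rw [mul_assoc, ← Real.exp_add, harg]
    -- sum the per-s bound
    have sum_bound : ∑ s ∈ Finset.powersetCard m Finset.univ, ∑ i ∈ sᶜ, g (insert i s)
        ≤ n' * Real.exp (l ^ 2 / 8 * (1 / d ^ 2)) *
            ((N.choose m : ℝ) * Real.exp (l ^ 2 / 8 * ∑ j ∈ Finset.Ico (N - m) N, 1 / (j : ℝ) ^ 2)) := by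
      calc ∑ s ∈ Finset.powersetCard m Finset.univ, ∑ i ∈ sᶜ, g (insert i s)
          ≤ ∑ s ∈ Finset.powersetCard m Finset.univ,
              n' * Real.exp (l ^ 2 / 8 * (1 / d ^ 2)) *
                Real.exp (l * (((Wt q s : ℝ) - (m : ℝ) * K / N) / n')) :=
            Finset.sum_le_sum key
        _ = n' * Real.exp (l ^ 2 / 8 * (1 / d ^ 2)) *
              ∑ s ∈ Finset.powersetCard m Finset.univ,
                Real.exp (l * (((Wt q s : ℝ) - (m : ℝ) * K / N) / n')) := by
            rw [Finset.mul_sum]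
        _ ≤ _ := by
            apply mul_le_mul_of_nonneg_left _ (by positivity)
            exact ihm
    -- put it together via double counting
    have dc := double_count g m
    have hchoose : ((N.choose (m+1) : ℕ) : ℝ) * ((m:ℝ) + 1) = (N.choose m : ℝ) * n' := by
      have := Nat.add_one_mul_choose_eq N m
      have h2 := Nat.choose_succ_right_eq N m
      have := congrArg (fun n : ℕ => (n : ℝ)) h2
      push_cast [Nat.cast_sub (by omega : m ≤ N)] at this
      rw [hn']
      convert this using 2 <;> push_cast <;> ring
    have hIco : ∑ j ∈ Finset.Ico (N - (m+1)) N, 1 / (j : ℝ) ^ 2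
        = 1 / d ^ 2 + ∑ j ∈ Finset.Ico (N - m) N, 1 / (j : ℝ) ^ 2 := by
      have hsplit : Finset.Ico (N - (m + 1)) N = insert (N - (m+1)) (Finset.Ico (N - m) N) := by
        ext j; simp [Finset.mem_Ico, Finset.mem_insert]; omega
      rw [hsplit, Finset.sum_insert (by simp [Finset.mem_Ico]; omega)]
      congr 2
      rw [hd]
      push_cast [Nat.cast_sub (by omega : m + 1 ≤ N)]
      ring
    -- final
    have hm1pos : (0:ℝ) < (m:ℝ) + 1 := by positivity
    rw [← mul_le_mul_iff_right₀ hm1pos]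
    have lhs_eq : ((m:ℝ) + 1) * ∑ t ∈ Finset.powersetCard (m+1) Finset.univ,
        Real.exp (l * (((Wt q t : ℝ) - ((m+1:ℕ) : ℝ) * K / N) / ((N:ℝ) - ((m+1:ℕ):ℝ))))
        = ∑ s ∈ Finset.powersetCard m Finset.univ, ∑ i ∈ sᶜ, g (insert i s) := by
      rw [← dc]
      congr 1
      · push_cast; ring
      · apply Finset.sum_congr rfl
        intro t _
        simp only [hg]
        congr 1
        rw [hd]; push_cast; ring
    calc ((m:ℝ) + 1) * ∑ t ∈ Finset.powersetCard (m+1) Finset.univ,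
          Real.exp (l * (((Wt q t : ℝ) - ((m+1:ℕ) : ℝ) * K / N) / ((N:ℝ) - ((m+1:ℕ):ℝ))))
        = ∑ s ∈ Finset.powersetCard m Finset.univ, ∑ i ∈ sᶜ, g (insert i s) := lhs_eq
      _ ≤ n' * Real.exp (l ^ 2 / 8 * (1 / d ^ 2)) *
            ((N.choose m : ℝ) * Real.exp (l ^ 2 / 8 * ∑ j ∈ Finset.Ico (N - m) N, 1 / (j : ℝ) ^ 2)) := sum_bound
      _ = ((m:ℝ) + 1) * ((N.choose (m+1) : ℝ) *
            Real.exp (l ^ 2 / 8 * ∑ j ∈ Finset.Ico (N - (m+1)) N, 1 / (j : ℝ) ^ 2)) := by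
          rw [hIco, mul_add, Real.exp_add]
          have : (N.choose m : ℝ) * n' = ((m:ℝ) + 1) * (N.choose (m+1) : ℝ) := by
            rw [← hchoose]; ring
          calc n' * Real.exp (l ^ 2 / 8 * (1 / d ^ 2)) *
                ((N.choose m : ℝ) * Real.exp (l ^ 2 / 8 * ∑ j ∈ Finset.Ico (N - m) N, 1 / (j : ℝ) ^ 2))
              = ((N.choose m : ℝ) * n') * (Real.exp (l ^ 2 / 8 * (1 / d ^ 2)) *
                  Real.exp (l ^ 2 / 8 * ∑ j ∈ Finset.Ico (N - m) N, 1 / (j : ℝ) ^ 2)) := by ring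
            _ = (((m:ℝ) + 1) * (N.choose (m+1) : ℝ)) * (Real.exp (l ^ 2 / 8 * (1 / d ^ 2)) *
                  Real.exp (l ^ 2 / 8 * ∑ j ∈ Finset.Ico (N - m) N, 1 / (j : ℝ) ^ 2)) := by
                rw [this]
            _ = _ := by ring
      _ = _ := by push_cast; ring

lemma Wt_not {N : ℕ} (q : Fin N → Bool) (t : Finset (Fin N)) :
    Wt q t + Wt (fun i => !q i) t = t.card := by
  unfold Wt
  have : (t.filter (fun i => (!q i) = true)) = t.filter (fun i => ¬ q i = true) := by
    apply Finset.filter_congr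
    intro i _
    simp
  rw [this]
  exact Finset.card_filter_add_card_filter_not (p := fun i => q i = true)


/-- Chernoff counting step. -/
lemma chernoff_count {α : Type*} [DecidableEq α] (s : Finset α) (P : α → Prop) [DecidablePred P]
    (f : α → ℝ) (a l : ℝ) (hl : 0 ≤ l) (h : ∀ t ∈ s, P t → a ≤ f t) :
    ((s.filter P).card : ℝ) * Real.exp (l * a) ≤ ∑ t ∈ s, Real.exp (l * f t) := by
  calc ((s.filter P).card : ℝ) * Real.exp (l * a)
      = ∑ t ∈ s.filter P, Real.exp (l * a) := by rw [Finset.sum_const, nsmul_eq_mul]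
    _ ≤ ∑ t ∈ s.filter P, Real.exp (l * f t) := by
        apply Finset.sum_le_sum
        intro t ht
        obtain ⟨hts, hPt⟩ := Finset.mem_filter.1 ht
        exact Real.exp_le_exp.2 (mul_le_mul_of_nonneg_left (h t hts hPt) hl)
    _ ≤ ∑ t ∈ s, Real.exp (l * f t) := by
        apply Finset.sum_le_sum_of_subset_of_nonneg (Finset.filter_subset _ _)
        intro t _ _
        exact le_of_lt (Real.exp_pos _)

/-- One-sided (Serfling-type) tail bound for hypergeometric deviation. -/
lemma tail_bound {N : ℕ} (q : Fin N → Bool) (m : ℕ) (hm : 1 ≤ m) (hmN : m + 1 ≤ N)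
    (d0 : ℝ) (hd0 : 0 < d0) :
    (((Finset.powersetCard m (Finset.univ : Finset (Fin N))).filter
        (fun t => d0 < (Wt q t : ℝ) - (m : ℝ) * (Wt q Finset.univ : ℝ) / (N : ℝ))).card : ℝ)
      ≤ (N.choose m : ℝ) * Real.exp (-2 * d0 ^ 2 * N / (m * ((N : ℝ) - m + 1))) := by
  set K : ℝ := (Wt q Finset.univ : ℝ) with hK
  set k : ℝ := (N : ℝ) - m with hk
  have hmR : (1:ℝ) ≤ (m:ℝ) := by exact_mod_cast hm
  have hNR : (m:ℝ) + 1 ≤ (N:ℝ) := by exact_mod_cast hmN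
  have hkpos : (0:ℝ) < k := by rw [hk]; linarith
  have hNpos : (0:ℝ) < N := by linarith
  set S : ℝ := ∑ j ∈ Finset.Ico (N - m) N, 1 / (j : ℝ) ^ 2 with hS
  have hSpos : 0 < S := by
    rw [hS]
    apply Finset.sum_pos
    · intro j hj
      have : N - m ≤ j := (Finset.mem_Ico.1 hj).1
      have hj0 : 0 < j := by omega
      have : (0:ℝ) < (j:ℝ) := by exact_mod_cast hj0
      positivity
    · exact Finset.nonempty_Ico.2 (by omega)
  have hSle : S ≤ (m : ℝ) * (k + 1) / ((N : ℝ) * k ^ 2) := by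
    have := sum_inv_sq_bound m N hm hmN
    rw [hS, hk]
    exact this
  set a : ℝ := d0 / k with ha
  have hapos : 0 < a := by positivity
  set l : ℝ := 4 * a / S with hl
  have hlpos : 0 < l := by positivity
  have h1 := chernoff_count (Finset.powersetCard m (Finset.univ : Finset (Fin N)))
    (fun t => d0 < (Wt q t : ℝ) - (m : ℝ) * K / (N : ℝ))
    (fun t => ((Wt q t : ℝ) - (m : ℝ) * K / (N : ℝ)) / ((N : ℝ) - m)) a l (le_of_lt hlpos)
    (by
      intro t _ hPt
      rw [ha, ← hk]
      rw [div_le_div_iff₀ hkpos hkpos]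
      have : d0 ≤ (Wt q t : ℝ) - (m : ℝ) * K / (N : ℝ) := le_of_lt hPt
      nlinarith)
  have h2 := mgf_bound q l m hmN
  have h3 : (((Finset.powersetCard m (Finset.univ : Finset (Fin N))).filter
        (fun t => d0 < (Wt q t : ℝ) - (m : ℝ) * K / (N : ℝ))).card : ℝ) * Real.exp (l * a)
      ≤ (N.choose m : ℝ) * Real.exp (l ^ 2 / 8 * S) := le_trans h1 h2
  have h4 : (((Finset.powersetCard m (Finset.univ : Finset (Fin N))).filter
        (fun t => d0 < (Wt q t : ℝ) - (m : ℝ) * K / (N : ℝ))).card : ℝ)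
      ≤ (N.choose m : ℝ) * Real.exp (l ^ 2 / 8 * S - l * a) := by
    rw [Real.exp_sub, ← mul_div_assoc]
    rw [le_div_iff₀ (Real.exp_pos _)]
    exact h3
  have h5 : l ^ 2 / 8 * S - l * a = -2 * a ^ 2 / S := by
    rw [hl]
    field_simp
    ring
  rw [h5] at h4
  apply le_trans h4
  apply mul_le_mul_of_nonneg_left _ (Nat.cast_nonneg _)
  rw [Real.exp_le_exp]
  -- -2 a²/S ≤ -2 d0² N/(m(k+1))
  have hks : (0:ℝ) < (m : ℝ) * (k + 1) := by positivity
  have hinv : ((N : ℝ) * k ^ 2) / ((m : ℝ) * (k + 1)) ≤ 1 / S := by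
    rw [div_le_div_iff₀ hks hSpos]
    calc (N : ℝ) * k ^ 2 * S ≤ (N : ℝ) * k ^ 2 * ((m : ℝ) * (k + 1) / ((N : ℝ) * k ^ 2)) := by
          apply mul_le_mul_of_nonneg_left hSle (by positivity)
      _ = 1 * ((m : ℝ) * (k + 1)) := by field_simp
  have : 2 * d0 ^ 2 * N / (m * (k + 1)) ≤ 2 * a ^ 2 / S := by
    calc 2 * d0 ^ 2 * N / (m * (k + 1))
        = (2 * a ^ 2) * (((N : ℝ) * k ^ 2) / ((m : ℝ) * (k + 1))) := by
          rw [ha]; field_simp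
      _ ≤ (2 * a ^ 2) * (1 / S) := by
          apply mul_le_mul_of_nonneg_left hinv (by positivity)
      _ = 2 * a ^ 2 / S := by ring
  rw [hk] at this ⊢
  have e1 : -2 * a ^ 2 / S = -(2 * a ^ 2 / S) := by ring
  have e2 : -2 * d0 ^ 2 * (N:ℝ) / ((m:ℝ) * ((N:ℝ) - (m:ℝ) + 1))
      = -(2 * d0 ^ 2 * (N:ℝ) / ((m:ℝ) * ((N:ℝ) - (m:ℝ) + 1))) := by ring
  rw [e1, e2]
  exact neg_le_neg this

/-- Bouman–Fehr classical sampling bound for the Hamming-weight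
estimation strategy on binary strings: for every q ∈ {0,1}^N, the probability
(over a uniformly random m-element subset t of {1,…,N}) that the relative
Hamming weight of q restricted to t differs from that of q restricted to the
complement of t by more than δ is at most 2·exp(−δ²·mN/(N+2)). -/
theorem stmt1 (N m : ℕ) (hm : 0 < m) (hmN : (m : ℝ) ≤ (N : ℝ) / 2)
    (δ : ℝ) (hδ : 0 < δ) (q : Fin N → Bool) :
    ((((Finset.powersetCard m (Finset.univ : Finset (Fin N))).filter (fun t =>
        δ < |((t.filter fun i => q i = true).card : ℝ) / (t.card : ℝ)
            - (((tᶜ).filter fun i => q i = true).card : ℝ) / ((tᶜ).card : ℝ)|)).card : ℝ)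
        / (N.choose m : ℝ))
      ≤ 2 * Real.exp (-(δ ^ 2) * ((m : ℝ) * (N : ℝ)) / ((N : ℝ) + 2)) := by
  have hm1 : 1 ≤ m := hm
  have hmR : (1:ℝ) ≤ (m:ℝ) := by exact_mod_cast hm1
  have h2m : 2 * m ≤ N := by
    have : (2:ℝ) * (m:ℝ) ≤ (N:ℝ) := by linarith
    exact_mod_cast this
  have hmN' : m + 1 ≤ N := by omega
  have hNR : (m:ℝ) + 1 ≤ (N:ℝ) := by exact_mod_cast hmN'
  have hNpos : (0:ℝ) < (N:ℝ) := by linarith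
  have hkpos : (0:ℝ) < (N:ℝ) - m := by linarith
  set q' : Fin N → Bool := fun i => !q i with hq'
  set d0 : ℝ := δ * m * ((N:ℝ) - m) / N with hd0def
  have hd0pos : 0 < d0 := by rw [hd0def]; positivity
  set E1 := (Finset.powersetCard m (Finset.univ : Finset (Fin N))).filter
      (fun t => d0 < (Wt q t : ℝ) - (m : ℝ) * (Wt q Finset.univ : ℝ) / (N : ℝ)) with hE1def
  set E2 := (Finset.powersetCard m (Finset.univ : Finset (Fin N))).filter
      (fun t => d0 < (Wt q' t : ℝ) - (m : ℝ) * (Wt q' Finset.univ : ℝ) / (N : ℝ)) with hE2def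
  have hsub : (Finset.powersetCard m (Finset.univ : Finset (Fin N))).filter (fun t =>
        δ < |((t.filter fun i => q i = true).card : ℝ) / (t.card : ℝ)
            - (((tᶜ).filter fun i => q i = true).card : ℝ) / ((tᶜ).card : ℝ)|) ⊆ E1 ∪ E2 := by
    intro t ht
    obtain ⟨htP, hδt⟩ := Finset.mem_filter.1 ht
    have hcard : t.card = m := Finset.mem_powersetCard_univ.1 htP
    have hccard : (tᶜ).card = N - m := by rw [Finset.card_compl, hcard]; simp
    have hccardR : ((tᶜ).card : ℝ) = (N:ℝ) - m := by
      rw [hccard]; push_cast [Nat.cast_sub (by omega : m ≤ N)]; ring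
    have hcardR : (t.card : ℝ) = (m:ℝ) := by rw [hcard]
    have hw12 : Wt q t + Wt q tᶜ = Wt q Finset.univ := Wt_compl_add q t
    have hw2R : (Wt q tᶜ : ℝ) = (Wt q Finset.univ : ℝ) - (Wt q t : ℝ) := by
      have := congrArg (fun n : ℕ => (n:ℝ)) hw12
      push_cast at this; linarith
    have hδ' : δ < |(Wt q t : ℝ)/(m:ℝ) - (Wt q tᶜ : ℝ)/((N:ℝ) - m)| := by
      rw [hcardR, hccardR] at hδt
      exact hδt
    have hq't : (Wt q' t : ℝ) = (m:ℝ) - (Wt q t : ℝ) := by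
      have := congrArg (fun n : ℕ => (n:ℝ)) (Wt_not q t)
      push_cast at this
      rw [hcard] at this
      push_cast at this
      linarith
    have hq'u : (Wt q' Finset.univ : ℝ) = (N:ℝ) - (Wt q Finset.univ : ℝ) := by
      have := congrArg (fun n : ℕ => (n:ℝ)) (Wt_not q Finset.univ)
      push_cast at this
      have hcu : (Finset.univ : Finset (Fin N)).card = N := by simp
      rw [hcu] at this
      push_cast at this
      linarith
    have hmk : (0:ℝ) < (m:ℝ) * ((N:ℝ) - m) / N := by positivity
    rw [Finset.mem_union]
    rcases abs_cases ((Wt q t : ℝ)/(m:ℝ) - (Wt q tᶜ : ℝ)/((N:ℝ) - m)) with ⟨heq, _⟩ | ⟨heq, _⟩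
    · left
      rw [hE1def, Finset.mem_filter]
      refine ⟨htP, ?_⟩
      rw [heq] at hδ'
      have hident : ((Wt q t : ℝ)/(m:ℝ) - (Wt q tᶜ : ℝ)/((N:ℝ) - m)) * ((m:ℝ) * ((N:ℝ) - m) / N)
          = (Wt q t : ℝ) - (m:ℝ) * (Wt q Finset.univ : ℝ) / (N:ℝ) := by
        rw [hw2R]
        field_simp
        ring
      have h9 := mul_lt_mul_of_pos_right hδ' hmk
      rw [hident] at h9
      rw [hd0def]
      calc δ * (m:ℝ) * ((N:ℝ) - m) / N = δ * ((m:ℝ) * ((N:ℝ) - m) / (N:ℝ)) := by ring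
        _ < _ := h9
    · right
      rw [hE2def, Finset.mem_filter]
      refine ⟨htP, ?_⟩
      rw [heq] at hδ'
      have hident : (-((Wt q t : ℝ)/(m:ℝ) - (Wt q tᶜ : ℝ)/((N:ℝ) - m))) * ((m:ℝ) * ((N:ℝ) - m) / N)
          = (Wt q' t : ℝ) - (m:ℝ) * (Wt q' Finset.univ : ℝ) / (N:ℝ) := by
        rw [hq't, hq'u, hw2R]
        field_simp
        ring
      have h9 := mul_lt_mul_of_pos_right hδ' hmk
      rw [hident] at h9
      rw [hd0def]
      calc δ * (m:ℝ) * ((N:ℝ) - m) / N = δ * ((m:ℝ) * ((N:ℝ) - m) / (N:ℝ)) := by ring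
        _ < _ := h9
  -- combine
  have hC : (0:ℝ) < (N.choose m : ℝ) := by
    exact_mod_cast Nat.choose_pos (by omega : m ≤ N)
  have hE1b := tail_bound q m hm1 hmN' d0 hd0pos
  have hE2b := tail_bound q' m hm1 hmN' d0 hd0pos
  rw [← hE1def] at hE1b
  rw [← hE2def] at hE2b
  set X : ℝ := Real.exp (-2 * d0 ^ 2 * N / (m * ((N : ℝ) - m + 1))) with hX
  have hcards : ((((Finset.powersetCard m (Finset.univ : Finset (Fin N))).filter (fun t =>
        δ < |((t.filter fun i => q i = true).card : ℝ) / (t.card : ℝ)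
            - (((tᶜ).filter fun i => q i = true).card : ℝ) / ((tᶜ).card : ℝ)|)).card : ℝ))
      ≤ (E1.card : ℝ) + (E2.card : ℝ) := by
    have h1 := Finset.card_le_card hsub
    have h2 := Finset.card_union_le E1 E2
    have := le_trans h1 h2
    exact_mod_cast this
  -- exponent comparison
  have hcore : (N:ℝ)^2 * (((N:ℝ) - m) + 1) ≤ 2 * ((N:ℝ) - m)^2 * ((N:ℝ) + 2) := by
    nlinarith [sq_nonneg ((N:ℝ) - 2*m), hNpos, hmR, hmN]
  have hexp : -2 * d0 ^ 2 * N / (m * ((N : ℝ) - m + 1)) ≤ -(δ ^ 2) * ((m : ℝ) * (N : ℝ)) / ((N : ℝ) + 2) := by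
    rw [hd0def]
    rw [div_le_div_iff₀ (by positivity) (by positivity)]
    have hNne : (N:ℝ) ≠ 0 := ne_of_gt hNpos
    have key : δ ^ 2 * ((m:ℝ) * (N:ℝ)) * ((m:ℝ) * ((N:ℝ) - m + 1))
        ≤ 2 * (δ * (m:ℝ) * ((N:ℝ) - m) / N) ^ 2 * (N:ℝ) * ((N:ℝ) + 2) := by
      have expand : 2 * (δ * (m:ℝ) * ((N:ℝ) - m) / N) ^ 2 * (N:ℝ) * ((N:ℝ) + 2)
          = δ ^ 2 * (m:ℝ)^2 / N * (2 * ((N:ℝ) - m)^2 * ((N:ℝ) + 2)) := by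
        field_simp
      have expand2 : δ ^ 2 * ((m:ℝ) * (N:ℝ)) * ((m:ℝ) * ((N:ℝ) - m + 1))
          = δ ^ 2 * (m:ℝ)^2 / N * ((N:ℝ)^2 * (((N:ℝ) - m) + 1)) := by
        field_simp
      rw [expand, expand2]
      apply mul_le_mul_of_nonneg_left hcore (by positivity)
    nlinarith [key]
  have hXle : X ≤ Real.exp (-(δ ^ 2) * ((m : ℝ) * (N : ℝ)) / ((N : ℝ) + 2)) := by
    rw [hX]; exact Real.exp_le_exp.2 hexp
  rw [div_le_iff₀ hC]
  calc ((((Finset.powersetCard m (Finset.univ : Finset (Fin N))).filter (fun t =>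
        δ < |((t.filter fun i => q i = true).card : ℝ) / (t.card : ℝ)
            - (((tᶜ).filter fun i => q i = true).card : ℝ) / ((tᶜ).card : ℝ)|)).card : ℝ))
      ≤ (E1.card : ℝ) + (E2.card : ℝ) := hcards
    _ ≤ (N.choose m : ℝ) * X + (N.choose m : ℝ) * X := add_le_add hE1b hE2b
    _ = 2 * X * (N.choose m : ℝ) := by ring
    _ ≤ 2 * Real.exp (-(δ ^ 2) * ((m : ℝ) * (N : ℝ)) / ((N : ℝ) + 2)) * (N.choose m : ℝ) := by
        apply mul_le_mul_of_nonneg_right _ (le_of_lt hC)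
        linarith [hXle]

end Main
end BoumanFehr
end

section
/- Let a, b ∈ B = {0,1}×{0,1} with a = (a^bt, a^ph), b = (b^bt, b^ph), and suppose a^bt = 0. Write z̄ = 1 − z for z ∈ {0,1}. Let S be the linear isomorphism of (ℂ²)^{⊗4} that permutes the four tensor factors from order (1,2,3,4) to order (2,3,1,4). Then S(|φ_{a^bt}^{a^ph}⟩ ⊗ |φ_{b^bt}^{b^ph}⟩) = (1/(2√2)) [ |φ_0^0⟩ ⊗ (|0, b^bt⟩ + (−1)^{a^ph + b^ph} |1, b̄^bt⟩) + |φ_0^1⟩ ⊗ (|0, b^bt⟩ + (−1)^{a^ph + b^ph + 1} |1, b̄^bt⟩) + (−1)^{b^ph} |φ_1^0⟩ ⊗ (|0, b̄^bt⟩ + (−1)^{a^ph + b^ph} |1, b^bt⟩) + (−1)^{b^ph} |φ_1^1⟩ ⊗ (|0, b̄^bt⟩ + (−1)^{a^ph + b^ph + 1} |1, b^bt⟩) ]. -/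
/-!
Expanding both Bell states in the computational basis, `S` maps `φ_{0}^{p} ⊗ φ_{x}^{q}` to
`½ (|00⟩|0x⟩ + (-1)^q |01⟩|0x̄⟩ + (-1)^p |10⟩|1x⟩ + (-1)^(p+q) |11⟩|1x̄⟩)`. Re-expanding the first
pair of qubits in the Bell basis via `φ_x^0 + φ_x^1 = √2 |0x⟩` and `φ_x^0 - φ_x^1 = √2 |1x̄⟩` gives
the claimed form; the only cancellation beyond linear algebra is `((-1)^q)^2 = 1`.
-/

open TensorProduct

/-- The single-qubit space ℂ². -/
abbrev V : Type := ZMod 2 → ℂ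

/-- Standard basis vector |x⟩ of ℂ². -/
noncomputable def ket (x : ZMod 2) : V := fun i => if i = x then 1 else 0

/-- The Bell state |φ_x^y⟩ = (|0⟩⊗|x⟩ + (−1)^y |1⟩⊗|1−x⟩)/√2. -/
noncomputable def bell (x y : ZMod 2) : TensorProduct ℂ V V :=
  ((Real.sqrt 2 : ℂ))⁻¹ •
    (ket 0 ⊗ₜ[ℂ] ket x + ((-1 : ℂ)) ^ (y.val) • ket 1 ⊗ₜ[ℂ] ket (1 - x))

/-- The four-qubit space (ℂ²)^{⊗4}, grouped as (ℂ²⊗ℂ²)⊗(ℂ²⊗ℂ²). -/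
abbrev W : Type := TensorProduct ℂ (TensorProduct ℂ V V) (TensorProduct ℂ V V)

lemma ofReal_sqrt_two_sq : (Real.sqrt 2 : ℂ) ^ 2 = 2 := by
  rw [← Complex.ofReal_pow, Real.sq_sqrt zero_le_two, Complex.ofReal_ofNat]

section BellBasis

variable (x : ZMod 2)

lemma bell_zero_add_bell_one :
    bell x 0 + bell x 1 = (Real.sqrt 2 : ℂ) • ket 0 ⊗ₜ[ℂ] ket x := by
  simp only [bell, ZMod.val_zero, ZMod.val_one, pow_zero, pow_one, one_smul]
  match_scalars <;> field_simp <;> norm_num [ofReal_sqrt_two_sq]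

lemma bell_zero_sub_bell_one :
    bell x 0 - bell x 1 = (Real.sqrt 2 : ℂ) • ket 1 ⊗ₜ[ℂ] ket (1 - x) := by
  simp only [bell, ZMod.val_zero, ZMod.val_one, pow_zero, pow_one, one_smul]
  match_scalars <;> field_simp <;> norm_num [ofReal_sqrt_two_sq]

lemma bell_zero_tmul_add_bell_one_tmul_sub {M : Type*} [AddCommGroup M] [Module ℂ M]
    (u w : M) (c : ℂ) :
    bell x 0 ⊗ₜ[ℂ] (u + c • w) + bell x 1 ⊗ₜ[ℂ] (u + -c • w)
      = (Real.sqrt 2 : ℂ) •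
          ((ket 0 ⊗ₜ[ℂ] ket x) ⊗ₜ[ℂ] u + c • (ket 1 ⊗ₜ[ℂ] ket (1 - x)) ⊗ₜ[ℂ] w) := by
  have regroup : bell x 0 ⊗ₜ[ℂ] (u + c • w) + bell x 1 ⊗ₜ[ℂ] (u + -c • w)
      = (bell x 0 + bell x 1) ⊗ₜ[ℂ] u + c • (bell x 0 - bell x 1) ⊗ₜ[ℂ] w := by
    simp only [tmul_add, add_tmul, sub_tmul, tmul_smul, neg_smul, smul_sub, tmul_neg]
    abel
  rw [regroup, bell_zero_add_bell_one, bell_zero_sub_bell_one, ← smul_tmul', ← smul_tmul',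
    smul_comm c, smul_add]

end BellBasis

lemma map_bell_zero_tmul_bell {F : Type*} [FunLike F W W] [LinearMapClass F ℂ W W] (S : F)
    (hS : ∀ v1 v2 v3 v4 : V,
      S ((v1 ⊗ₜ[ℂ] v2) ⊗ₜ[ℂ] (v3 ⊗ₜ[ℂ] v4)) = (v2 ⊗ₜ[ℂ] v3) ⊗ₜ[ℂ] (v1 ⊗ₜ[ℂ] v4))
    (p x q : ZMod 2) :
    S (bell 0 p ⊗ₜ[ℂ] bell x q)
      = (2 : ℂ)⁻¹ •
        ((ket 0 ⊗ₜ[ℂ] ket 0) ⊗ₜ[ℂ] (ket 0 ⊗ₜ[ℂ] ket x)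
          + (-1 : ℂ) ^ q.val • (ket 0 ⊗ₜ[ℂ] ket 1) ⊗ₜ[ℂ] (ket 0 ⊗ₜ[ℂ] ket (1 - x))
          + (-1 : ℂ) ^ p.val • (ket 1 ⊗ₜ[ℂ] ket 0) ⊗ₜ[ℂ] (ket 1 ⊗ₜ[ℂ] ket x)
          + ((-1 : ℂ) ^ p.val * (-1) ^ q.val) •
              (ket 1 ⊗ₜ[ℂ] ket 1) ⊗ₜ[ℂ] (ket 1 ⊗ₜ[ℂ] ket (1 - x))) := by
  simp only [bell, sub_zero, smul_add, tmul_add, add_tmul, ← smul_tmul', tmul_smul, smul_smul,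
    map_add, map_smul, hS]
  match_scalars <;> field_simp <;> norm_num [ofReal_sqrt_two_sq]

/-- the Bell-swap expansion of S(|φ_a⟩⊗|φ_b⟩) when a^bt = 0,
where S permutes the four tensor factors from order (1,2,3,4) to (2,3,1,4). -/
theorem stmt5 (a b : ZMod 2 × ZMod 2) (ha : a.1 = 0)
    (S : W ≃ₗ[ℂ] W)
    (hS : ∀ v1 v2 v3 v4 : V,
      S ((v1 ⊗ₜ[ℂ] v2) ⊗ₜ[ℂ] (v3 ⊗ₜ[ℂ] v4)) = (v2 ⊗ₜ[ℂ] v3) ⊗ₜ[ℂ] (v1 ⊗ₜ[ℂ] v4)) :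
    S (bell a.1 a.2 ⊗ₜ[ℂ] bell b.1 b.2)
      = ((2 * Real.sqrt 2 : ℝ) : ℂ)⁻¹ •
        ( bell 0 0 ⊗ₜ[ℂ]
            (ket 0 ⊗ₜ[ℂ] ket b.1
              + ((-1 : ℂ)) ^ (a.2.val + b.2.val) • ket 1 ⊗ₜ[ℂ] ket (1 - b.1))
        + bell 0 1 ⊗ₜ[ℂ]
            (ket 0 ⊗ₜ[ℂ] ket b.1
              + ((-1 : ℂ)) ^ (a.2.val + b.2.val + 1) • ket 1 ⊗ₜ[ℂ] ket (1 - b.1))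
        + ((-1 : ℂ)) ^ (b.2.val) •
            (bell 1 0 ⊗ₜ[ℂ]
              (ket 0 ⊗ₜ[ℂ] ket (1 - b.1)
                + ((-1 : ℂ)) ^ (a.2.val + b.2.val) • ket 1 ⊗ₜ[ℂ] ket b.1))
        + ((-1 : ℂ)) ^ (b.2.val) •
            (bell 1 1 ⊗ₜ[ℂ]
              (ket 0 ⊗ₜ[ℂ] ket (1 - b.1)
                + ((-1 : ℂ)) ^ (a.2.val + b.2.val + 1) • ket 1 ⊗ₜ[ℂ] ket b.1))) := by
  obtain ⟨a₁, p⟩ := a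
  obtain ⟨x, q⟩ := b
  obtain rfl : a₁ = 0 := ha
  have hq : ((-1 : ℂ) ^ q.val) ^ 2 = 1 := by rw [← pow_mul, pow_mul', neg_one_sq, one_pow]
  rw [map_bell_zero_tmul_bell S hS]
  simp only [pow_add, pow_one, mul_neg_one]
  conv_rhs => rw [add_assoc, ← smul_add, bell_zero_tmul_add_bell_one_tmul_sub,
    bell_zero_tmul_add_bell_one_tmul_sub, sub_zero, sub_self]
  push_cast
  match_scalars <;> field_simp
  exact hq.symm
end

section
/- There exists a function f : B × B × B → {0,1} such that for all a, b ∈ B, if S denotes the linear isomorphism of (ℂ²)^{⊗4} permuting the four tensor factors from order (1,2,3,4) to order (2,3,1,4), then S(|φ_a⟩ ⊗ |φ_b⟩) = (1/2) · Σ_{x ∈ B} (−1)^{f(a,b,x)} |φ_x⟩ ⊗ |φ_{a+b+x}⟩, where a + b + x denotes coordinatewise addition modulo 2 in B = (ℤ/2ℤ)². -/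
/-!
Writing `|φ_(x,y)⟩ = 2^{-1/2} Σ_u (-1)^{yu} |u⟩|u+x⟩`, the left-hand side is
`½ Σ_{u,v} (-1)^{a₂u + b₂v} |u+a₁, v, u, v+b₁⟩`. Expanding `|φ_x⟩|φ_{a+b+x}⟩` the same way, with
summation indices `p, q`, the sign `(-1)^{a₁x₂ + b₂(a₁+x₁)}` turns the sum over `x₂` into the character
sum `Σ_{x₂} (-1)^{x₂(a₁+p+q)}`, which vanishes unless `q = p + a₁`; the substitution
`(u, v) = (p + a₁, p + x₁)` then matches the surviving terms with the left-hand side.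
-/

open TensorProduct

abbrev B : Type := ZMod 2 × ZMod 2

def sgn (z : ZMod 2) : ℂ := (-1) ^ z.val

lemma sgn_add (z w : ZMod 2) : sgn (z + w) = sgn z * sgn w := by
  rw [sgn, sgn, sgn, ← pow_add, ZMod.val_add, ← neg_one_pow_eq_pow_mod_two]

lemma sum_zmodTwo {M : Type*} [AddCommMonoid M] (g : ZMod 2 → M) :
    ∑ t : ZMod 2, g t = g 0 + g 1 :=
  Fin.sum_univ_two g

lemma sum_sgn_mul (c : ZMod 2) : ∑ t : ZMod 2, sgn (t * c) = if c = 0 then 2 else 0 := by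
  rw [sum_zmodTwo, zero_mul, one_mul]
  obtain rfl | rfl : c = 0 ∨ c = 1 := by revert c; decide
  · norm_num [sgn]
  · norm_num [sgn, show ZMod.val (1 : ZMod 2) = 1 from rfl]

def bellSign : B × B × B → ZMod 2
  | ((a₁, _), (_, b₂), (x₁, x₂)) => b₂ * (a₁ + x₁) + a₁ * x₂

lemma sum_bellSign_smul_eq_two_smul {M : Type*} [AddCommGroup M] [Module ℂ M]
    (K : ZMod 2 → ZMod 2 → ZMod 2 → ZMod 2 → M) (a b : B) :
    ∑ x : B, sgn (bellSign (a, b, x)) •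
        ∑ p, ∑ q, sgn (x.2 * p + (a + b + x).2 * q) • K p (p + x.1) q (q + (a + b + x).1)
      = (2 : ℂ) • ∑ u, ∑ v, sgn (a.2 * u + b.2 * v) • K (u + a.1) v u (v + b.1) := by
  obtain ⟨a₁, a₂⟩ := a
  obtain ⟨b₁, b₂⟩ := b
  calc _ = ∑ x₁, ∑ p, ∑ q, (∑ x₂, sgn (x₂ * (a₁ + p + q))) •
          sgn (b₂ * (x₁ + a₁) + (a₂ + b₂) * q) • K p (p + x₁) q (q + (a₁ + b₁ + x₁)) := by
        simp only [Fintype.sum_prod_type, Finset.smul_sum, Finset.sum_mul, Finset.sum_smul,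
          smul_smul, ← sgn_add]
        refine Finset.sum_congr rfl fun x₁ _ => ?_
        rw [Finset.sum_comm]
        refine Finset.sum_congr rfl fun p _ => ?_
        rw [Finset.sum_comm]
        refine Finset.sum_congr rfl fun q _ => Finset.sum_congr rfl fun x₂ _ => ?_
        congr 2
        simp only [bellSign, Prod.mk_add_mk]
        grind
    _ = ∑ x₁, ∑ p, (2 : ℂ) • sgn (b₂ * (x₁ + a₁) + (a₂ + b₂) * (p + a₁)) •
          K p (p + x₁) (p + a₁) (p + a₁ + (a₁ + b₁ + x₁)) := by
        have hq : ∀ p q : ZMod 2, a₁ + p + q = 0 ↔ p + a₁ = q := by revert a₁; decide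
        simp only [sum_sgn_mul, ite_smul, zero_smul, hq, Finset.sum_ite_eq, Finset.mem_univ,
          if_true]
    _ = _ := by
        simp only [Finset.smul_sum]
        rw [Finset.sum_comm]
        refine Fintype.sum_equiv (Equiv.addRight a₁) _ _ fun p => ?_
        refine Fintype.sum_equiv (Equiv.addRight p) _ _ fun x₁ => ?_
        simp only [Equiv.coe_addRight]
        congr 2
        all_goals congr 1 <;> grind

lemma bell_eq_sum (x y : ZMod 2) :
    bell x y = (Real.sqrt 2 : ℂ)⁻¹ • ∑ u, sgn (y * u) • ket u ⊗ₜ[ℂ] ket (u + x) := by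
  rw [bell, sum_zmodTwo]
  simp [sgn, sub_eq_add_neg, ZMod.neg_eq_self_mod_two, add_comm]

noncomputable def ket4 (p q r s : ZMod 2) : W := (ket p ⊗ₜ[ℂ] ket q) ⊗ₜ[ℂ] (ket r ⊗ₜ[ℂ] ket s)

lemma bell_tmul_bell (a b : B) :
    bell a.1 a.2 ⊗ₜ[ℂ] bell b.1 b.2 =
      (2 : ℂ)⁻¹ • ∑ u, ∑ v, sgn (a.2 * u + b.2 * v) • ket4 u (u + a.1) v (v + b.1) := by
  have hsqrt : ((Real.sqrt 2 : ℂ))⁻¹ * ((Real.sqrt 2 : ℂ))⁻¹ = (2 : ℂ)⁻¹ := by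
    rw [← mul_inv, ← Complex.ofReal_mul, Real.mul_self_sqrt zero_le_two, Complex.ofReal_ofNat]
  rw [bell_eq_sum, bell_eq_sum, smul_tmul_smul, hsqrt, sum_tmul]
  simp only [tmul_sum, smul_tmul_smul, sgn_add, ket4, Finset.smul_sum, smul_smul]

/-- there is a sign function f : B×B×B → {0,1} such that for all
a, b ∈ B, S(|φ_a⟩⊗|φ_b⟩) = (1/2)·Σ_{x∈B} (−1)^{f(a,b,x)} |φ_x⟩⊗|φ_{a+b+x}⟩,
where S permutes the four tensor factors from order (1,2,3,4) to (2,3,1,4). -/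
theorem stmt7 (S : W ≃ₗ[ℂ] W)
    (hS : ∀ v1 v2 v3 v4 : V,
      S ((v1 ⊗ₜ[ℂ] v2) ⊗ₜ[ℂ] (v3 ⊗ₜ[ℂ] v4)) = (v2 ⊗ₜ[ℂ] v3) ⊗ₜ[ℂ] (v1 ⊗ₜ[ℂ] v4)) :
    ∃ f : B × B × B → ZMod 2, ∀ a b : B,
      S (bell a.1 a.2 ⊗ₜ[ℂ] bell b.1 b.2)
        = (2 : ℂ)⁻¹ • ∑ x : B,
            ((-1 : ℂ)) ^ ((f (a, b, x)).val) •
              (bell x.1 x.2 ⊗ₜ[ℂ] bell (a + b + x).1 (a + b + x).2) := by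
  refine ⟨bellSign, fun a b => ?_⟩
  have hS4 : ∀ p q r s, S (ket4 p q r s) = ket4 q r p s := fun p q r s => hS _ _ _ _
  calc S (bell a.1 a.2 ⊗ₜ[ℂ] bell b.1 b.2)
      = (2 : ℂ)⁻¹ • ∑ u, ∑ v, sgn (a.2 * u + b.2 * v) • ket4 (u + a.1) v u (v + b.1) := by
        simp only [bell_tmul_bell, map_smul, map_sum, hS4]
    _ = (2 : ℂ)⁻¹ • (2 : ℂ)⁻¹ • ∑ x : B, sgn (bellSign (a, b, x)) •
          ∑ p, ∑ q, sgn (x.2 * p + (a + b + x).2 * q) • ket4 p (p + x.1) q (q + (a + b + x).1) := by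
        rw [sum_bellSign_smul_eq_two_smul ket4, smul_smul, smul_smul,
          inv_mul_cancel_right₀ two_ne_zero]
    _ = _ := by
        rw [Finset.smul_sum]
        congr 1
        refine Finset.sum_congr rfl fun x _ => ?_
        rw [bell_tmul_bell, smul_comm]
        rfl
end
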